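/- arXiv:2012.15707 — 7 statements merged into one kernel-verified Lean document; each statement's English description precedes it below -/
import Mathlib

section
/- Let T be a fully exact subcategory of an exact category E. If T is weakly right admissible (i.e. the inclusion ι_* : T → E admits a right adjoint ι^! and each adjunction counit ι_*ι^!E → E is an inflation), then the pair (T, T^{⊥₀}) is a torsion pair in E, where T^{⊥₀} = {E ∈ E | Hom(T,E) = 0}: every object E of E fits into a conflation T' → E → F with T' ∈ T and F ∈ T^{⊥₀}. -/
open CategoryTheory CategoryTheory.Limits ZeroObject

universe v u

namespace ExactCatPaper

variable (E : Type u) [Category.{v} E] [Preadditive E] [HasZeroObject E]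

/-- An exact structure on an additive category `E`, following Quillen/Keller:
a class of conflations (kernel–cokernel pairs) closed under isomorphism,
containing identities, with deflations closed under composition and stable
under pullback, and inflations stable under pushout. -/
structure ExactStructure where
  conf : ∀ {X Y Z : E}, (X ⟶ Y) → (Y ⟶ Z) → Prop
  comp_zero : ∀ {X Y Z : E} {i : X ⟶ Y} {d : Y ⟶ Z}, conf i d → i ≫ d = 0
  is_kernel : ∀ {X Y Z : E} {i : X ⟶ Y} {d : Y ⟶ Z}, conf i d →
    ∀ {W : E} (f : W ⟶ Y), f ≫ d = 0 → ∃! g : W ⟶ X, g ≫ i = f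
  is_cokernel : ∀ {X Y Z : E} {i : X ⟶ Y} {d : Y ⟶ Z}, conf i d →
    ∀ {W : E} (f : Y ⟶ W), i ≫ f = 0 → ∃! g : Z ⟶ W, d ≫ g = f
  conf_iso : ∀ {X Y Z X' Y' Z' : E} (eX : X ≅ X') (eY : Y ≅ Y') (eZ : Z ≅ Z')
      {i : X ⟶ Y} {d : Y ⟶ Z}, conf i d →
      conf (eX.inv ≫ i ≫ eY.hom) (eY.inv ≫ d ≫ eZ.hom)
  conf_id : ∀ X : E, conf (0 : (0 : E) ⟶ X) (𝟙 X)
  defl_comp : ∀ {X Y Z : E} {d : X ⟶ Y} {d' : Y ⟶ Z},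
      (∃ (A : E) (i : A ⟶ X), conf i d) → (∃ (A : E) (i : A ⟶ Y), conf i d') →
      ∃ (A : E) (i : A ⟶ X), conf i (d ≫ d')
  pullback_defl : ∀ {Y Z W : E} (d : Y ⟶ Z) (f : W ⟶ Z),
      (∃ (A : E) (i : A ⟶ Y), conf i d) →
      ∃ (P : E) (p₁ : P ⟶ Y) (p₂ : P ⟶ W), IsPullback p₁ p₂ d f ∧
        ∃ (A : E) (i : A ⟶ P), conf i p₂
  pushout_infl : ∀ {X Y W : E} (i : X ⟶ Y) (f : X ⟶ W),
      (∃ (Z : E) (d : Y ⟶ Z), conf i d) →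
      ∃ (P : E) (j : W ⟶ P) (g : Y ⟶ P), IsPushout i f g j ∧
        ∃ (Z : E) (d : P ⟶ Z), conf j d

variable {E}

/-- `i` is an inflation: it is part of some conflation. -/
def ExactStructure.IsInflation (S : ExactStructure E) {X Y : E} (i : X ⟶ Y) : Prop :=
  ∃ (Z : E) (d : Y ⟶ Z), S.conf i d

/-- `d` is a deflation: it is part of some conflation. -/
def ExactStructure.IsDeflation (S : ExactStructure E) {Y Z : E} (d : Y ⟶ Z) : Prop :=
  ∃ (X : E) (i : X ⟶ Y), S.conf i d

/-- The right Hom-orthogonal `T^{⊥₀}` of a full subcategory. -/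
def homOrthRight (T : Set E) : Set E :=
  {X | ∀ t ∈ T, ∀ f : t ⟶ X, f = 0}

/-- The left Hom-orthogonal `^{⊥₀}F` of a full subcategory. -/
def homOrthLeft (F : Set E) : Set E :=
  {X | ∀ f' ∈ F, ∀ g : X ⟶ f', g = 0}

/-- A full subcategory is closed under extensions. -/
def ExtClosed (S : ExactStructure E) (T : Set E) : Prop :=
  ∀ {X Y Z : E} {i : X ⟶ Y} {d : Y ⟶ Z}, S.conf i d → X ∈ T → Z ∈ T → Y ∈ T

/-- `T` is weakly right admissible: a fully exact (extension-closed) subcategory such that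
the inclusion admits a right adjoint (expressed pointwise as a coreflection) whose
adjunction counit is an inflation. -/
def IsWeaklyRightAdmissible (S : ExactStructure E) (T : Set E) : Prop :=
  ExtClosed S T ∧
  ∀ X : E, ∃ (T' : E) (ε : T' ⟶ X), T' ∈ T ∧ S.IsInflation ε ∧
    ∀ W : E, W ∈ T → ∀ f : W ⟶ X, ∃! g : W ⟶ T', g ≫ ε = f

/-- `F` is weakly left admissible: the dual notion. -/
def IsWeaklyLeftAdmissible (S : ExactStructure E) (F : Set E) : Prop :=
  ExtClosed S F ∧
  ∀ X : E, ∃ (F' : E) (η : X ⟶ F'), F' ∈ F ∧ S.IsDeflation η ∧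
    ∀ W : E, W ∈ F → ∀ f : X ⟶ W, ∃! g : F' ⟶ W, η ≫ g = f

/-- `(T, F)` is a torsion pair: `Hom(T,F) = 0` and every object fits into a conflation
with torsion part in `T` and torsion-free part in `F`. -/
def IsTorsionPair (S : ExactStructure E) (T F : Set E) : Prop :=
  (∀ t ∈ T, ∀ f ∈ F, ∀ g : t ⟶ f, g = 0) ∧
  ∀ X : E, ∃ (t f : E) (i : t ⟶ X) (d : X ⟶ f), t ∈ T ∧ f ∈ F ∧ S.conf i d

/-- The right perpendicular subcategory `T^⊥` (Hom and Ext¹ vanishing; Ext¹-vanishing is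
expressed by the splitting of all conflations `X → M → t` with `t ∈ T`). -/
def rightPerp (S : ExactStructure E) (T : Set E) : Set E :=
  {X | ∀ t ∈ T, (∀ f : t ⟶ X, f = 0) ∧
    ∀ (M : E) (i : X ⟶ M) (d : M ⟶ t), S.conf i d → ∃ r : M ⟶ X, i ≫ r = 𝟙 X}

/-- A torsion pair `(T,F)` is perpendicular if moreover `Ext¹(T,F) = 0`, i.e. every
conflation `f' → X → t` with `f' ∈ F`, `t ∈ T` splits. -/
def IsPerpTorsionPair (S : ExactStructure E) (T F : Set E) : Prop :=
  IsTorsionPair S T F ∧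
  ∀ {f' X t : E} (i : f' ⟶ X) (d : X ⟶ t), S.conf i d → f' ∈ F → t ∈ T →
    ∃ r : X ⟶ f', i ≫ r = 𝟙 f'

/-!
Let `ε : T' ⟶ X` be the coreflection of `X` into `T`, completed to a conflation
`T' ⟶ X ⟶ F`. Given `f : t ⟶ F` with `t ∈ T`, pulling the deflation `X ⟶ F` back along `f`
yields a conflation `T' ⟶ P ⟶ t`, so `P ∈ T` by extension-closure. Hence `P ⟶ X` factors
through `ε` and is killed by `X ⟶ F`; as `P ⟶ t` is an epimorphism, `f = 0`.
-/

namespace ExactStructure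

variable {S : ExactStructure E} {X Y Z : E} {i : X ⟶ Y} {d : Y ⟶ Z}

lemma mono_of_conf (h : S.conf i d) : Mono i where
  right_cancellation a b hab := by
    obtain ⟨g, -, hg⟩ := S.is_kernel h (b ≫ i)
      (by rw [Category.assoc, S.comp_zero h, Limits.comp_zero])
    exact (hg a hab).trans (hg b rfl).symm

lemma epi_of_conf (h : S.conf i d) : Epi d where
  left_cancellation a b hab := by
    obtain ⟨g, -, hg⟩ := S.is_cokernel h (d ≫ b)
      (by rw [← Category.assoc, S.comp_zero h, zero_comp])
    exact (hg a hab).trans (hg b rfl).symm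

lemma conf_of_isKernel (h : S.conf i d) {X' : E} (j : X' ⟶ Y) [Mono j] (hj : j ≫ d = 0)
    (hlift : ∀ {W : E} (f : W ⟶ Y), f ≫ d = 0 → ∃ g : W ⟶ X', g ≫ j = f) : S.conf j d := by
  have := mono_of_conf h
  obtain ⟨u, hu, -⟩ := S.is_kernel h j hj
  obtain ⟨w, hw⟩ := hlift i (S.comp_zero h)
  let e : X ≅ X' :=
    { hom := w
      inv := u
      hom_inv_id := by rw [← cancel_mono i, Category.assoc, hu, hw, Category.id_comp]
      inv_hom_id := by rw [← cancel_mono j, Category.assoc, hw, hu, Category.id_comp] }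
  simpa [e, hu] using S.conf_iso e (Iso.refl Y) (Iso.refl Z) h

lemma conf_of_isPullback (h : S.conf i d) {P W : E} {p₁ : P ⟶ Y} {p₂ : P ⟶ W} {f : W ⟶ Z}
    (hpb : IsPullback p₁ p₂ d f) (hp₂ : S.IsDeflation p₂) {v : X ⟶ P} (hv₁ : v ≫ p₁ = i)
    (hv₂ : v ≫ p₂ = 0) : S.conf v p₂ := by
  obtain ⟨A, a, ha⟩ := hp₂
  have := mono_of_conf h
  have : Mono v := mono_of_mono_fac hv₁
  refine conf_of_isKernel ha v hv₂ fun g hg => ?_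
  obtain ⟨k, hk, -⟩ := S.is_kernel h (g ≫ p₁)
    (by rw [Category.assoc, hpb.w, ← Category.assoc, hg, zero_comp])
  refine ⟨k, hpb.hom_ext ?_ ?_⟩
  · rw [Category.assoc, hv₁, hk]
  · rw [Category.assoc, hv₂, Limits.comp_zero, hg]

end ExactStructure

lemma mem_homOrthRight_of_coreflection {S : ExactStructure E} {T : Set E} (hExt : ExtClosed S T)
    {T' X F : E} {ε : T' ⟶ X} {d : X ⟶ F} (hconf : S.conf ε d) (hT' : T' ∈ T)
    (hfac : ∀ W ∈ T, ∀ f : W ⟶ X, ∃ g : W ⟶ T', g ≫ ε = f) : F ∈ homOrthRight T := by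
  intro t ht f
  obtain ⟨P, p₁, p₂, hpb, hp₂⟩ := S.pullback_defl d f ⟨T', ε, hconf⟩
  have hw : ε ≫ d = 0 ≫ f := by rw [S.comp_zero hconf, zero_comp]
  have hP : P ∈ T := hExt (S.conf_of_isPullback hconf hpb hp₂ (hpb.lift_fst ε 0 hw)
    (hpb.lift_snd ε 0 hw)) hT' ht
  obtain ⟨g, hg⟩ := hfac P hP p₁
  obtain ⟨A, a, ha⟩ := hp₂
  have := S.epi_of_conf ha
  rw [← cancel_epi p₂, ← hpb.w, ← hg, Category.assoc, S.comp_zero hconf, comp_zero, comp_zero]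

/-- If `T` is a weakly right admissible fully exact subcategory of an exact
category `E`, then `(T, T^{⊥₀})` is a torsion pair in `E`: every object `X` of `E` fits into
a conflation `T' → X → F` with `T' ∈ T` and `F ∈ T^{⊥₀}` (and `Hom(T, T^{⊥₀}) = 0`). -/
theorem weaklyRightAdmissible_torsionPair
    (S : ExactStructure E) (T : Set E) (hT : IsWeaklyRightAdmissible S T) :
    IsTorsionPair S T (homOrthRight T) := by
  obtain ⟨hExt, hCoreflection⟩ := hT
  refine ⟨fun t ht F hF g => hF t ht g, fun X => ?_⟩
  obtain ⟨T', ε, hT', ⟨F, d, hconf⟩, huniv⟩ := hCoreflection X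
  exact ⟨T', F, ε, d, hT', mem_homOrthRight_of_coreflection hExt hconf hT'
    (fun W hW f => (huniv W hW f).exists), hconf⟩

end ExactCatPaper
end

section
/- (Quillen's obscure axiom) Let d : X → Y be a morphism in an exact category E which admits a kernel. If there exists a morphism φ : X' → X such that the composite d ∘ φ is a deflation, then d is itself a deflation. -/
/-!
Let `k : K ⟶ X` be a kernel of `d`. The map `h = [φ k] : X' ⊞ K ⟶ X` is the pullback of the
deflation `φ ≫ d` along `d`, hence a deflation, and `h ≫ d = fst ≫ φ ≫ d` is a composite of
deflations. If `n` is a kernel of `h ≫ d`, then `n ≫ h = q ≫ k` for some `q`, and this square is a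
pushout: `h` is a cokernel of its own kernel, which factors through `n`, and `q` is split by the lift
of `inr` through `n`. So `k` is a pushout of the inflation `n`, and `d`, a cokernel of `k`, is a
deflation.
-/

open CategoryTheory CategoryTheory.Limits ZeroObject

universe v u

namespace ExactCatPaper

variable (E : Type u) [Category.{v} E] [Preadditive E] [HasZeroObject E]

variable {E}

section

variable {C : Type*} [Category C]

theorem isPushout_of_isColimit_cokernelCofork [HasZeroMorphisms C] {M N A K X : C}
    {m : M ⟶ A} {h : A ⟶ X} {w : m ≫ h = 0} (hh : IsColimit (CokernelCofork.ofπ h w))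
    {n : N ⟶ A} {q : N ⟶ K} {k : K ⟶ X} (sq : n ≫ h = q ≫ k)
    {μ : M ⟶ N} (hμn : μ ≫ n = m) (hμq : μ ≫ q = 0) {r : K ⟶ N} (hrq : r ≫ q = 𝟙 K) :
    IsPushout n q h k := by
  have : Epi h := epi_of_isColimit_cofork hh
  refine IsPushout.mk' sq (fun _ _ _ hφ _ => (cancel_epi h).1 hφ) (fun T a b hab => ?_)
  obtain ⟨c, hc : h ≫ c = a⟩ := CokernelCofork.IsColimit.desc' hh a
    (by rw [← hμn, Category.assoc, hab, ← Category.assoc, hμq, zero_comp])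
  refine ⟨c, hc, ?_⟩
  calc k ≫ c = r ≫ q ≫ k ≫ c := by rw [← Category.assoc r, hrq, Category.id_comp]
    _ = r ≫ q ≫ b := by rw [← reassoc_of% sq, hc, hab]
    _ = b := by rw [← Category.assoc, hrq, Category.id_comp]

noncomputable def isColimitCokernelCoforkOfEpiComp [HasZeroMorphisms C] {N A K X Y : C}
    {n : N ⟶ A} {h : A ⟶ X} [Epi h] {d : X ⟶ Y} {wn : n ≫ h ≫ d = 0}
    (hn : IsColimit (CokernelCofork.ofπ (h ≫ d) wn)) {q : N ⟶ K} {k : K ⟶ X}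
    (sq : n ≫ h = q ≫ k) (w : k ≫ d = 0) : IsColimit (CokernelCofork.ofπ d w) :=
  have : Epi (h ≫ d) := epi_of_isColimit_cofork hn
  have : Epi d := epi_of_epi h d
  CokernelCofork.IsColimit.ofπ' d w fun t ht =>
    let l := CokernelCofork.IsColimit.desc' hn (h ≫ t)
      (by rw [← Category.assoc, sq, Category.assoc, ht, comp_zero])
    ⟨l.1, (cancel_epi h).1 (by rw [← Category.assoc]; exact l.2)⟩

theorem isPullback_biprod_fst_desc [Preadditive C] {X' K X Y : C} [HasBinaryBiproduct X' K]
    (φ : X' ⟶ X) {k : K ⟶ X} {d : X ⟶ Y} {w : k ≫ d = 0} (hk : IsLimit (KernelFork.ofι k w)) :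
    IsPullback biprod.fst (biprod.desc φ k) (φ ≫ d) d := by
  have : Mono k := mono_of_isLimit_fork hk
  refine IsPullback.mk' (by ext <;> simp [w]) (fun T a b hfst hdesc => ?_) (fun T a b hab => ?_)
  · refine biprod.hom_ext _ _ hfst ((cancel_mono k).1 ?_)
    simpa [biprod.desc_eq, Preadditive.comp_add, ← Category.assoc, hfst] using hdesc
  · obtain ⟨l, hl : l ≫ k = b - a ≫ φ⟩ :=
      KernelFork.IsLimit.lift' hk (b - a ≫ φ) (by simp [← hab])
    exact ⟨biprod.lift a l, by simp, by simp [biprod.desc_eq, hl]⟩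

end

namespace ExactStructure

variable {S : ExactStructure E}

noncomputable def conf.isColimit {A B Z : E} {i : A ⟶ B} {p : B ⟶ Z} (h : S.conf i p) :
    IsColimit (CokernelCofork.ofπ p (S.comp_zero h)) :=
  Cofork.IsColimit.ofExistsUnique fun s => S.is_cokernel h s.π (CokernelCofork.condition s)

noncomputable def conf.isLimit {A B Z : E} {i : A ⟶ B} {p : B ⟶ Z} (h : S.conf i p) :
    IsLimit (KernelFork.ofι i (S.comp_zero h)) :=
  Fork.IsLimit.ofExistsUnique fun s => S.is_kernel h s.ι (KernelFork.condition s)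

theorem conf.of_isColimit {A B Z C : E} {i : A ⟶ B} {p : B ⟶ Z} (h : S.conf i p) {q : B ⟶ C}
    {w : i ≫ q = 0} (hq : IsColimit (CokernelCofork.ofπ q w)) : S.conf i q := by
  have hpq : p ≫ (h.isColimit.coconePointUniqueUpToIso hq).hom = q :=
    h.isColimit.comp_coconePointUniqueUpToIso_hom hq WalkingParallelPair.one
  simpa [hpq] using
    S.conf_iso (Iso.refl _) (Iso.refl _) (h.isColimit.coconePointUniqueUpToIso hq) h

theorem conf.middle_iso {A B Z B' : E} {i : A ⟶ B} {p : B ⟶ Z} (h : S.conf i p) (e : B ≅ B') :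
    S.conf (i ≫ e.hom) (e.inv ≫ p) := by
  simpa using S.conf_iso (Iso.refl A) e (Iso.refl Z) h

theorem IsDeflation.of_isPullback {P Y Z W : E} {p₁ : P ⟶ Y} {p₂ : P ⟶ W} {d : Y ⟶ Z}
    {f : W ⟶ Z} (hd : S.IsDeflation d) (hP : IsPullback p₁ p₂ d f) : S.IsDeflation p₂ := by
  obtain ⟨P₀, q₁, q₂, hP₀, A, i, hi⟩ := S.pullback_defl d f hd
  refine ⟨A, i ≫ (hP.isoIsPullback _ _ hP₀).inv, ?_⟩
  simpa [hP.isoIsPullback_hom_snd] using hi.middle_iso (hP.isoIsPullback _ _ hP₀).symm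

theorem IsInflation.of_isPushout {X Y W P : E} {i : X ⟶ Y} {f : X ⟶ W} {g : Y ⟶ P}
    {j : W ⟶ P} (hi : S.IsInflation i) (hP : IsPushout i f g j) : S.IsInflation j := by
  obtain ⟨P₀, j₀, g₀, hP₀, Z, d, hd⟩ := S.pushout_infl i f hi
  refine ⟨Z, (hP.isoIsPushout _ _ hP₀).hom ≫ d, ?_⟩
  simpa [hP.inr_isoIsPushout_inv] using hd.middle_iso (hP.isoIsPushout _ _ hP₀).symm

theorem hasBinaryBiproduct (S : ExactStructure E) (A B : E) : HasBinaryBiproduct A B := by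
  obtain ⟨P, j, g, hP, -⟩ :=
    S.pushout_infl (0 : (0 : E) ⟶ A) (0 : (0 : E) ⟶ B) ⟨A, 𝟙 A, S.conf_id A⟩
  have : HasBinaryCoproduct A B := HasColimit.mk ⟨_, BinaryCofan.IsColimit.mk (BinaryCofan.mk g j)
    (fun a b => hP.desc a b (by simp)) (fun a b => hP.inl_desc a b _)
    (fun a b => hP.inr_desc a b _)
    (fun a b _ ha hb =>
      hP.hom_ext (ha.trans (hP.inl_desc a b _).symm) (hb.trans (hP.inr_desc a b _).symm))⟩
  exact HasBinaryBiproduct.of_hasBinaryCoproduct A B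

theorem conf_biprod_inr_fst (S : ExactStructure E) (A B : E) [HasBinaryBiproduct A B] :
    S.conf (biprod.inr : B ⟶ A ⊞ B) biprod.fst := by
  obtain ⟨Z, c, hc⟩ :=
    IsInflation.of_isPushout ⟨A, 𝟙 A, S.conf_id A⟩ (IsPushout.of_has_biproduct A B)
  exact hc.of_isColimit (w := biprod.inr_fst) (biprod.isCokernelInrCokernelFork A B)

theorem IsDeflation.of_comp {A X Y K : E} {h : A ⟶ X} {d : X ⟶ Y} {k : K ⟶ X} {w : k ≫ d = 0}
    (hk : IsLimit (KernelFork.ofι k w)) (hh : S.IsDeflation h) (hhd : S.IsDeflation (h ≫ d))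
    {s : K ⟶ A} (hs : s ≫ h = k) : S.IsDeflation d := by
  obtain ⟨M, m, hm⟩ := hh
  obtain ⟨N, n, hn⟩ := hhd
  have : Mono k := mono_of_isLimit_fork hk
  have : Epi h := epi_of_isColimit_cofork hm.isColimit
  obtain ⟨q, hq : q ≫ k = n ≫ h⟩ := KernelFork.IsLimit.lift' hk (n ≫ h)
    (by simpa using S.comp_zero hn)
  obtain ⟨μ, hμ : μ ≫ n = m⟩ := KernelFork.IsLimit.lift' hn.isLimit m
    (by rw [← Category.assoc, S.comp_zero hm, zero_comp])
  obtain ⟨r, hr : r ≫ n = s⟩ := KernelFork.IsLimit.lift' hn.isLimit s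
    (by rw [← Category.assoc, hs, w])
  have hμq : μ ≫ q = 0 := by
    rw [← cancel_mono k, Category.assoc, hq, ← Category.assoc, hμ, S.comp_zero hm, zero_comp]
  have hrq : r ≫ q = 𝟙 K := by
    rw [← cancel_mono k, Category.assoc, hq, ← Category.assoc, hr, hs, Category.id_comp]
  have hpush : IsPushout n q h k :=
    isPushout_of_isColimit_cokernelCofork hm.isColimit hq.symm hμ hμq hrq
  obtain ⟨Z, c, hc⟩ := IsInflation.of_isPushout ⟨Y, _, hn⟩ hpush
  exact ⟨K, k, hc.of_isColimit (isColimitCokernelCoforkOfEpiComp hn.isColimit hq.symm w)⟩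

end ExactStructure

/-- **Quillen's obscure axiom.** Let `d : X ⟶ Y` be a morphism in an exact
category which admits a kernel. If there exists `φ : X' ⟶ X` such that `φ ≫ d` is a
deflation, then `d` is a deflation. -/
theorem obscure_axiom
    (S : ExactStructure E) {X Y : E} (d : X ⟶ Y)
    (hker : ∃ (K : E) (k : K ⟶ X), k ≫ d = 0 ∧
      ∀ {W : E} (f : W ⟶ X), f ≫ d = 0 → ∃! g : W ⟶ K, g ≫ k = f)
    (hφ : ∃ (X' : E) (φ : X' ⟶ X), S.IsDeflation (φ ≫ d)) :
    S.IsDeflation d := by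
  obtain ⟨K, k, hkd, hk⟩ := hker
  obtain ⟨X', φ, hφd⟩ := hφ
  have hkLim : IsLimit (KernelFork.ofι k hkd) :=
    Fork.IsLimit.ofExistsUnique fun s => hk s.ι (KernelFork.condition s)
  have := S.hasBinaryBiproduct X' K
  have hsq := isPullback_biprod_fst_desc φ hkLim
  have hdesc_d : S.IsDeflation (biprod.desc φ k ≫ d) := by
    rw [← hsq.w]
    exact S.defl_comp ⟨K, _, S.conf_biprod_inr_fst X' K⟩ hφd
  exact (hφd.of_isPullback hsq).of_comp hkLim hdesc_d (biprod.inr_desc φ k)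

end ExactCatPaper
end

section
/- In an exact category, the pullback of an inflation along a deflation exists and is an inflation, and the pushout of a deflation along an inflation exists and is a deflation. -/
open CategoryTheory CategoryTheory.Limits ZeroObject

universe v u

namespace ExactCatPaper

variable (E : Type u) [Category.{v} E] [Preadditive E] [HasZeroObject E]

variable {E}

/-!
The pullback of an inflation `i` (with cokernel `p`) along a deflation `d` is the kernel of the
deflation `d ≫ p`. For the pushout of a deflation `d` along an inflation `i`, the pushout `g` of
`i` along `d` exists and its kernel is the composite of inflations `ker d ≫ i`; since inflations are
not assumed to compose, one shows instead that `β ≫ g` is a deflation for a split epimorphism `β`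
built from pullbacks of deflations. Then `ker g` is the pushout of the inflation `ker (β ≫ g)`
along the induced map, so it is an inflation, and `g` is its cokernel.
-/

section

variable {C : Type*} [Category C] [HasZeroMorphisms C]

def IsKernel {K W P : C} (k : K ⟶ W) (g : W ⟶ P) : Prop :=
  k ≫ g = 0 ∧ ∀ {V : C} (v : V ⟶ W), v ≫ g = 0 → ∃! w : V ⟶ K, w ≫ k = v

def IsCokernel {X Y Z : C} (i : X ⟶ Y) (c : Y ⟶ Z) : Prop :=
  i ≫ c = 0 ∧ ∀ {V : C} (f : Y ⟶ V), i ≫ f = 0 → ∃! h : Z ⟶ V, c ≫ h = f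

theorem IsKernel.mono {K W P : C} {k : K ⟶ W} {g : W ⟶ P} (hk : IsKernel k g) : Mono k where
  right_cancellation a b hab := by
    obtain ⟨_, -, huniq⟩ := hk.2 (b ≫ k) (by rw [Category.assoc, hk.1, comp_zero])
    rw [huniq a hab, huniq b rfl]

theorem IsCokernel.epi {X Y Z : C} {i : X ⟶ Y} {c : Y ⟶ Z} (hc : IsCokernel i c) : Epi c where
  left_cancellation a b hab := by
    obtain ⟨_, -, huniq⟩ := hc.2 (c ≫ a) (by rw [← Category.assoc, hc.1, zero_comp])
    rw [huniq a rfl, huniq b hab.symm]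

theorem isCokernel_comp_of_isPushout {X Y W P Z : C} {i : X ⟶ Y} {f : X ⟶ W} {g : Y ⟶ P}
    {j : W ⟶ P} {t : P ⟶ Z} (h : IsPushout i f g j) (ht : IsCokernel j t) :
    IsCokernel i (g ≫ t) := by
  have := ht.epi
  refine ⟨by rw [← Category.assoc, h.w, Category.assoc, ht.1, comp_zero], fun φ hφ => ?_⟩
  obtain ⟨ψ, hψ, -⟩ := ht.2 (h.desc φ 0 (by rw [hφ, comp_zero])) (h.inr_desc _ _ _)
  refine ⟨ψ, by beta_reduce; rw [Category.assoc, hψ, h.inl_desc], fun ψ' hψ' => ?_⟩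
  rw [← cancel_epi t, hψ]
  apply h.hom_ext
  · rw [h.inl_desc, ← hψ', Category.assoc]
  · rw [h.inr_desc, ← Category.assoc, ht.1, zero_comp]

theorem isKernel_comp_of_comm {K X Y W P Z : C} {ι : K ⟶ X} {d : X ⟶ Y} {i : X ⟶ W}
    {g : W ⟶ P} {j : Y ⟶ P} {t : P ⟶ Z} [Mono j] (hι : IsKernel ι d) (hi : IsKernel i (g ≫ t))
    (w : i ≫ g = d ≫ j) : IsKernel (ι ≫ i) g := by
  have := hι.mono
  have := hi.mono
  refine ⟨by rw [Category.assoc, w, ← Category.assoc, hι.1, zero_comp], fun v hv => ?_⟩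
  obtain ⟨v₁, hv₁, -⟩ := hi.2 v (by rw [← Category.assoc, hv, zero_comp])
  obtain ⟨v₂, hv₂, -⟩ := hι.2 v₁ <| by
    rw [← cancel_mono j, Category.assoc, ← w, ← Category.assoc, hv₁, hv, zero_comp]
  refine ⟨v₂, by beta_reduce; rw [← Category.assoc, hv₂, hv₁], fun v₂' hv₂' => ?_⟩
  rw [← cancel_mono (ι ≫ i), hv₂', ← Category.assoc, hv₂, hv₁]

theorem isPullback_of_isKernel_comp {K X Y Z W : C} {i : X ⟶ Z} {p : Z ⟶ W} {d : Y ⟶ Z}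
    {κ : K ⟶ Y} {p₁ : K ⟶ X} (hi : IsKernel i p) (hκ : IsKernel κ (d ≫ p))
    (w : p₁ ≫ i = κ ≫ d) : IsPullback p₁ κ i d := by
  have := hi.mono
  have := hκ.mono
  have hlift (s : PullbackCone i d) : ∃! l : s.pt ⟶ K, l ≫ κ = s.snd :=
    hκ.2 s.snd (by rw [← Category.assoc, ← s.condition, Category.assoc, hi.1, comp_zero])
  refine IsPullback.of_isLimit (PullbackCone.IsLimit.mk w (fun s => (hlift s).exists.choose)
    (fun s => ?_) (fun s => (hlift s).exists.choose_spec) (fun s m _ hm => ?_))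
  · rw [← cancel_mono i, Category.assoc, w, ← Category.assoc, (hlift s).exists.choose_spec,
      s.condition]
  · rw [← cancel_mono κ, hm, (hlift s).exists.choose_spec]

end

theorem isPushout_of_isSplitEpi {C : Type*} [Category C] [Preadditive C] {M K U W P : C}
    {κ : M ⟶ U} {χ : M ⟶ K} {β : U ⟶ W} {k : K ⟶ W} {g : W ⟶ P} [IsSplitEpi β]
    (hκ : IsKernel κ (β ≫ g)) (hk : IsKernel k g) (w : κ ≫ β = χ ≫ k) :
    IsPushout κ χ β k := by
  have := hk.mono
  obtain ⟨ξ, hξ, -⟩ := hκ.2 (β ≫ section_ β - 𝟙 U) (by simp)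
  obtain ⟨ν, hν, -⟩ := hκ.2 (k ≫ section_ β) (by simp [hk.1])
  have hξχ : ξ ≫ χ = 0 := by
    rw [← cancel_mono k, Category.assoc, ← w, ← Category.assoc, hξ]
    simp
  have hνχ : ν ≫ χ = 𝟙 K := by
    rw [← cancel_mono k, Category.assoc, ← w, ← Category.assoc, hν]
    simp
  refine IsPushout.of_isColimit (PushoutCocone.IsColimit.mk w (fun s => section_ β ≫ s.inl)
    (fun s => ?_) (fun s => ?_) (fun s m hm _ => by rw [← hm, IsSplitEpi.id_assoc]))
  · have : (β ≫ section_ β - 𝟙 U) ≫ s.inl = 0 := by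
      rw [← hξ, Category.assoc, s.condition, ← Category.assoc, hξχ, zero_comp]
    rwa [Preadditive.sub_comp, Category.id_comp, sub_eq_zero, Category.assoc] at this
  · rw [← Category.assoc, ← hν, Category.assoc, s.condition, ← Category.assoc, hνχ,
      Category.id_comp]

namespace ExactStructure

variable (S : ExactStructure E)

theorem isKernel_of_conf {X Y Z : E} {i : X ⟶ Y} {d : Y ⟶ Z} (h : S.conf i d) : IsKernel i d :=
  ⟨S.comp_zero h, S.is_kernel h⟩

theorem isCokernel_of_conf {X Y Z : E} {i : X ⟶ Y} {d : Y ⟶ Z} (h : S.conf i d) :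
    IsCokernel i d :=
  ⟨S.comp_zero h, S.is_cokernel h⟩

theorem conf_comp_iso {X Y Y' Z : E} {i : X ⟶ Y} {d : Y ⟶ Z} (h : S.conf i d) (e : Y ≅ Y') :
    S.conf (i ≫ e.hom) (e.inv ≫ d) := by
  simpa using S.conf_iso (Iso.refl X) e (Iso.refl Z) h

theorem conf_of_isCokernel {X Y Z : E} {i : X ⟶ Y} {c : Y ⟶ Z} (hi : S.IsInflation i)
    (hc : IsCokernel i c) : S.conf i c := by
  obtain ⟨Z₀, d, hd⟩ := hi
  obtain ⟨φ, hφ, -⟩ := S.is_cokernel hd c hc.1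
  obtain ⟨ψ, hψ, -⟩ := hc.2 d (S.comp_zero hd)
  have := (S.isCokernel_of_conf hd).epi
  have := hc.epi
  have hφψ : φ ≫ ψ = 𝟙 Z₀ := by
    rw [← cancel_epi d, ← Category.assoc, hφ, hψ, Category.comp_id]
  have hψφ : ψ ≫ φ = 𝟙 Z := by
    rw [← cancel_epi c, ← Category.assoc, hψ, hφ, Category.comp_id]
  simpa [hφ] using S.conf_iso (Iso.refl X) (Iso.refl Y) ⟨φ, ψ, hφψ, hψφ⟩ hd

theorem isInflation_of_isPushout {X Y W P : E} {i : X ⟶ Y} {f : X ⟶ W} {g : Y ⟶ P}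
    {j : W ⟶ P} (hi : S.IsInflation i) (h : IsPushout i f g j) : S.IsInflation j := by
  obtain ⟨P', j', g', h', Z, d, hd⟩ := S.pushout_infl i f hi
  obtain ⟨e, he⟩ : ∃ e : P' ≅ P, j' ≫ e.hom = j := ⟨_, IsPushout.inr_isoIsPushout_hom _ _ h' h⟩
  exact ⟨Z, e.inv ≫ d, he ▸ S.conf_comp_iso hd e⟩

theorem conf_of_isDeflation_comp {U W P K : E} {β : U ⟶ W} {g : W ⟶ P} {k : K ⟶ W}
    [IsSplitEpi β] (hβg : S.IsDeflation (β ≫ g)) (hk : IsKernel k g) : S.conf k g := by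
  obtain ⟨M, κ, hκ⟩ := hβg
  obtain ⟨χ, hχ, -⟩ := hk.2 (κ ≫ β) (by rw [Category.assoc, S.comp_zero hκ])
  have hPO := isPushout_of_isSplitEpi (S.isKernel_of_conf hκ) hk hχ.symm
  refine S.conf_of_isCokernel (S.isInflation_of_isPushout ⟨_, _, hκ⟩ hPO) ⟨hk.1, fun f hf => ?_⟩
  have := (S.isCokernel_of_conf hκ).epi
  obtain ⟨h, hh, -⟩ := S.is_cokernel hκ (β ≫ f) <| by
    rw [← Category.assoc, ← hχ, Category.assoc, hf, Limits.comp_zero]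
  have hgh : g ≫ h = f := by rwa [Category.assoc, cancel_epi] at hh
  exact ⟨h, hgh, fun h' hh' => by rw [← cancel_epi (β ≫ g), Category.assoc, hh', ← hh]⟩

/-- `U` is the pullback of `d` along the map `W ×_Z P ⟶ Y` sending `(w, p)` to `p - g w`; the map
`β : U ⟶ W` sends `(x, (w, p))` to `w + i x`, and `w ↦ (0, (w, g w))` is a section of it. -/
theorem exists_isSplitEpi_isDeflation_comp {X Y W P Z : E} {i : X ⟶ W} {d : X ⟶ Y}
    {g : W ⟶ P} {j : Y ⟶ P} {t : P ⟶ Z} (hd : S.IsDeflation d) (hjt : S.conf j t)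
    (hgt : S.IsDeflation (g ≫ t)) (w : i ≫ g = d ≫ j) :
    ∃ (U : E) (β : U ⟶ W), IsSplitEpi β ∧ S.IsDeflation (β ≫ g) := by
  have := (S.isKernel_of_conf hjt).mono
  obtain ⟨V, p₁, p₂, hV, hp₂⟩ := S.pullback_defl (g ≫ t) t hgt
  obtain ⟨σ, hσ, -⟩ := S.is_kernel hjt (p₂ - p₁ ≫ g) (by simp [hV.w])
  obtain ⟨U, q₁, q₂, hU, hq₂⟩ := S.pullback_defl d σ hd
  let v : W ⟶ V := hV.lift (𝟙 W) g (by simp)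
  have hvσ : v ≫ σ = 0 := by
    rw [← cancel_mono j, Category.assoc, hσ]
    simp [v]
  refine ⟨U, q₂ ≫ p₁ + q₁ ≫ i, IsSplitEpi.mk' ⟨hU.lift 0 v (by simp [hvσ]), by simp [v]⟩, ?_⟩
  have hβg : (q₂ ≫ p₁ + q₁ ≫ i) ≫ g = q₂ ≫ p₂ := by
    rw [Preadditive.add_comp, Category.assoc, Category.assoc, w, ← Category.assoc q₁,
      hU.w, Category.assoc, hσ]
    simp
  exact hβg ▸ S.defl_comp hq₂ hp₂

theorem exists_isPullback_isInflation {X Z Y : E} (i : X ⟶ Z) (d : Y ⟶ Z)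
    (hi : S.IsInflation i) (hd : S.IsDeflation d) :
    ∃ (P : E) (p₁ : P ⟶ X) (p₂ : P ⟶ Y), IsPullback p₁ p₂ i d ∧ S.IsInflation p₂ := by
  obtain ⟨C, p, hip⟩ := hi
  obtain ⟨M, κ, hκ⟩ := S.defl_comp hd ⟨X, i, hip⟩
  obtain ⟨p₁, hp₁, -⟩ := S.is_kernel hip (κ ≫ d) (by rw [Category.assoc, S.comp_zero hκ])
  exact ⟨M, p₁, κ, isPullback_of_isKernel_comp (S.isKernel_of_conf hip)
    (S.isKernel_of_conf hκ) hp₁, C, d ≫ p, hκ⟩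

theorem exists_isPushout_isDeflation {X Y W : E} (d : X ⟶ Y) (i : X ⟶ W)
    (hd : S.IsDeflation d) (hi : S.IsInflation i) :
    ∃ (P : E) (q₁ : Y ⟶ P) (q₂ : W ⟶ P), IsPushout d i q₁ q₂ ∧ S.IsDeflation q₂ := by
  obtain ⟨K, ι, hιd⟩ := hd
  obtain ⟨P, j, g, hPO, Z, t, hjt⟩ := S.pushout_infl i d hi
  have := (S.isKernel_of_conf hjt).mono
  have hgt : S.conf i (g ≫ t) :=
    S.conf_of_isCokernel hi (isCokernel_comp_of_isPushout hPO (S.isCokernel_of_conf hjt))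
  obtain ⟨U, β, _, hβg⟩ := S.exists_isSplitEpi_isDeflation_comp ⟨K, ι, hιd⟩ hjt ⟨X, i, hgt⟩ hPO.w
  have hk := isKernel_comp_of_comm (S.isKernel_of_conf hιd) (S.isKernel_of_conf hgt) hPO.w
  exact ⟨P, j, g, hPO.flip, K, ι ≫ i, S.conf_of_isDeflation_comp hβg hk⟩

end ExactStructure

/-- In an exact category, the pullback of an inflation along a deflation
exists and is an inflation, and the pushout of a deflation along an inflation exists and
is a deflation. -/
theorem pullback_inflation_pushout_deflation (S : ExactStructure E) :
    (∀ {X Z Y : E} (i : X ⟶ Z) (d : Y ⟶ Z), S.IsInflation i → S.IsDeflation d →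
      ∃ (P : E) (p₁ : P ⟶ X) (p₂ : P ⟶ Y), IsPullback p₁ p₂ i d ∧ S.IsInflation p₂) ∧
    (∀ {X Y W : E} (d : X ⟶ Y) (i : X ⟶ W), S.IsDeflation d → S.IsInflation i →
      ∃ (P : E) (q₁ : Y ⟶ P) (q₂ : W ⟶ P), IsPushout d i q₁ q₂ ∧ S.IsDeflation q₂) :=
  ⟨S.exists_isPullback_isInflation, S.exists_isPushout_isDeflation⟩

end ExactCatPaper
end

section
/- Consider a commutative diagram in an exact category E whose two rows B' → B → B'' and C' → C → C'' are conflations, with vertical morphisms g' : B' → C', g : B → C, g'' : B'' → C''. If g' and g'' are deflations, then g is a deflation. -/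
open CategoryTheory CategoryTheory.Limits ZeroObject

universe v u

namespace ExactCatPaper

variable (E : Type u) [Category.{v} E] [Preadditive E] [HasZeroObject E]

variable {E}

/-!
Pulling the lower conflation back along `g''` gives a conflation `C' → P → B''` and a deflation
`P ⟶ C`; since deflations compose, it suffices to treat the case `g'' = 𝟙`. There, for
conflations `A → B → C`, `A' → B' → C` and `f : B ⟶ B'` over `C` restricting to a deflation
`a : A ⟶ A'`, the pullback of `B' → C` along `B → C` is split by `f`, which makes
`[i', f] : A' ⊞ B ⟶ B'` a deflation, hence also `(a ⊞ 𝟙) ≫ [i', f] = [i, 𝟙] ≫ f`, and so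
`snd ≫ f`. The kernel of `f` is that of `a` followed by `i`, and pushing the conflation
`A ⊞ K → A ⊞ B → B'` out along `snd : A ⊞ K ⟶ K` exhibits `K → B → B'` as a conflation.
-/

section ZeroMorphisms

variable {C : Type u} [Category.{v} C] [HasZeroMorphisms C]

noncomputable def isKernelCompOfCommSq {K A A' B B' Z : C} {κ : K ⟶ A} {a : A ⟶ A'}
    {i : A ⟶ B} {f : B ⟶ B'} {i' : A' ⟶ B'} {p' : B' ⟶ Z} {wκ : κ ≫ a = 0} {wi : i ≫ f ≫ p' = 0}
    (hκ : IsLimit (KernelFork.ofι κ wκ)) (hi : IsLimit (KernelFork.ofι i wi)) [Mono i']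
    (hsq : i ≫ f = a ≫ i') :
    IsLimit (KernelFork.ofι (κ ≫ i) (by simp [hsq, reassoc_of% wκ]) : KernelFork f) :=
  have : Mono κ := Fork.IsLimit.mono hκ
  have : Mono i := Fork.IsLimit.mono hi
  KernelFork.IsLimit.ofι' _ _ fun u hu => by
    obtain ⟨u₁, hu₁ : u₁ ≫ i = u⟩ := KernelFork.IsLimit.lift' hi u (by simp [reassoc_of% hu])
    have hu₁a : u₁ ≫ a = 0 := by
      rw [← cancel_mono i', Category.assoc, ← hsq, ← Category.assoc, hu₁, hu, zero_comp]
    obtain ⟨u₂, hu₂ : u₂ ≫ κ = u₁⟩ := KernelFork.IsLimit.lift' hκ u₁ hu₁a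
    exact ⟨u₂, by rw [← Category.assoc, hu₂, hu₁]⟩

variable [HasBinaryBiproducts C]

theorem isPullback_fst_biprod_map_id {A A' : C} (a : A ⟶ A') (B : C) :
    IsPullback (biprod.fst : A ⊞ B ⟶ A) (biprod.map a (𝟙 B)) a biprod.fst := by
  refine IsPullback.of_isLimit' ⟨by simp⟩ (PullbackCone.IsLimit.mk _
    (fun s => biprod.lift s.fst (s.snd ≫ biprod.snd)) (fun s => by simp) (fun s => ?_)
    (fun s m h₁ h₂ => ?_))
  · apply biprod.hom_ext
    · simpa using s.condition
    · simp
  · apply biprod.hom_ext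
    · simpa using h₁
    · simpa using congrArg (· ≫ biprod.snd) h₂

theorem isPushout_biprod_map_id_snd (A : C) {K B : C} (k : K ⟶ B) :
    IsPushout (biprod.map (𝟙 A) k) biprod.snd biprod.snd k := by
  refine IsPushout.of_isColimit' ⟨by simp⟩ (PushoutCocone.IsColimit.mk _
    (fun s => biprod.inr ≫ s.inl) (fun s => ?_) (fun s => ?_) (fun s m h₁ h₂ => ?_))
  · have h : biprod.inl ≫ s.inl = 0 := by simpa using congrArg (biprod.inl ≫ ·) s.condition
    apply biprod.hom_ext' <;> simp [h]
  · simpa using congrArg (biprod.inr ≫ ·) s.condition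
  · simp [← h₁]

noncomputable def isLimitKernelForkBiprodMapId (A : C) {K B Z : C} {k : K ⟶ B} {f : B ⟶ Z}
    {w : k ≫ f = 0} (hk : IsLimit (KernelFork.ofι k w)) :
    IsLimit (KernelFork.ofι (biprod.map (𝟙 A) k) (by simp [w] : _ ≫ biprod.snd ≫ f = 0)) :=
  have : Mono k := Fork.IsLimit.mono hk
  KernelFork.IsLimit.ofι' _ _ fun u hu =>
    have ⟨l, (hl : l ≫ k = _)⟩ :=
      KernelFork.IsLimit.lift' hk (u ≫ biprod.snd) (by simpa using hu)
    ⟨biprod.lift (u ≫ biprod.fst) l, by apply biprod.hom_ext <;> simp [hl]⟩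

end ZeroMorphisms

namespace ExactStructure

variable (S : ExactStructure E)

noncomputable def isLimitOfConf {X Y Z : E} {i : X ⟶ Y} {d : Y ⟶ Z} (h : S.conf i d) :
    IsLimit (KernelFork.ofι i (S.comp_zero h)) :=
  KernelFork.IsLimit.ofι _ _ (fun u hu => (S.is_kernel h u hu).choose)
    (fun u hu => (S.is_kernel h u hu).choose_spec.1)
    (fun u hu m hm => (S.is_kernel h u hu).choose_spec.2 m hm)

noncomputable def isColimitOfConf {X Y Z : E} {i : X ⟶ Y} {d : Y ⟶ Z} (h : S.conf i d) :
    IsColimit (CokernelCofork.ofπ d (S.comp_zero h)) :=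
  CokernelCofork.IsColimit.ofπ _ _ (fun u hu => (S.is_cokernel h u hu).choose)
    (fun u hu => (S.is_cokernel h u hu).choose_spec.1)
    (fun u hu m hm => (S.is_cokernel h u hu).choose_spec.2 m hm)

theorem mono_of_conf_s5 {X Y Z : E} {i : X ⟶ Y} {d : Y ⟶ Z} (h : S.conf i d) : Mono i :=
  Fork.IsLimit.mono (S.isLimitOfConf h)

theorem epi_of_conf_s5 {X Y Z : E} {i : X ⟶ Y} {d : Y ⟶ Z} (h : S.conf i d) : Epi d :=
  Cofork.IsColimit.epi (S.isColimitOfConf h)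

@[simp]
theorem lift_comp_of_conf {X Y Z W : E} {i : X ⟶ Y} {d : Y ⟶ Z} (h : S.conf i d) (u : W ⟶ Y)
    (hu : u ≫ d = u ≫ 0) : Fork.IsLimit.lift (S.isLimitOfConf h) u hu ≫ i = u :=
  Fork.IsLimit.lift_ι' _ _ _

@[simp]
theorem comp_desc_of_conf {X Y Z W : E} {i : X ⟶ Y} {d : Y ⟶ Z} (h : S.conf i d) (u : Y ⟶ W)
    (hu : i ≫ u = 0 ≫ u) : d ≫ Cofork.IsColimit.desc (S.isColimitOfConf h) u hu = u :=
  Cofork.IsColimit.π_desc' (S.isColimitOfConf h) u hu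

theorem conf_of_isDeflation_of_isLimit {X Y Z : E} {i : X ⟶ Y} {d : Y ⟶ Z}
    (hd : S.IsDeflation d) {w : i ≫ d = 0} (hi : IsLimit (KernelFork.ofι i w)) : S.conf i d := by
  obtain ⟨X', i', h⟩ := hd
  have he := hi.conePointUniqueUpToIso_hom_comp (S.isLimitOfConf h) .zero
  simp only [Fork.app_zero_eq_ι, Fork.ι_ofι] at he
  simpa [he] using S.conf_iso (hi.conePointUniqueUpToIso (S.isLimitOfConf h)).symm (Iso.refl _)
    (Iso.refl _) h

theorem conf_of_isInflation_of_isColimit {X Y Z : E} {i : X ⟶ Y} {d : Y ⟶ Z}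
    (hi : S.IsInflation i) {w : i ≫ d = 0} (hd : IsColimit (CokernelCofork.ofπ d w)) :
    S.conf i d := by
  obtain ⟨Z', d', h⟩ := hi
  have he := (S.isColimitOfConf h).comp_coconePointUniqueUpToIso_hom hd .one
  simp only [Cofork.app_one_eq_π, Cofork.π_ofπ] at he
  simpa [he] using S.conf_iso (Iso.refl _) (Iso.refl _)
    ((S.isColimitOfConf h).coconePointUniqueUpToIso hd) h

theorem isDeflation_iso_comp {Y' Y Z : E} (e : Y' ≅ Y) {d : Y ⟶ Z} (hd : S.IsDeflation d) :
    S.IsDeflation (e.hom ≫ d) := by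
  obtain ⟨X, i, h⟩ := hd
  exact ⟨X, i ≫ e.inv, by simpa using S.conf_iso (Iso.refl _) e.symm (Iso.refl _) h⟩

theorem isDeflation_of_isPullback {P Y Z W : E} {p₁ : P ⟶ Y} {p₂ : P ⟶ W} {d : Y ⟶ Z}
    {f : W ⟶ Z} (hP : IsPullback p₁ p₂ d f) (hd : S.IsDeflation d) : S.IsDeflation p₂ := by
  obtain ⟨P', p₁', p₂', hP', hp₂'⟩ := S.pullback_defl d f hd
  simpa using S.isDeflation_iso_comp (hP.isoIsPullback _ _ hP') hp₂'

theorem conf_lift_of_isPullback {A Y Z P W : E} {i : A ⟶ Y} {d : Y ⟶ Z} (h : S.conf i d)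
    {p₁ : P ⟶ Y} {p₂ : P ⟶ W} {f : W ⟶ Z} (hP : IsPullback p₁ p₂ d f) :
    S.conf (hP.lift i 0 (by simp [S.comp_zero h])) p₂ := by
  have := S.mono_of_conf_s5 h
  have := mono_of_mono_fac (hP.lift_fst i 0 (by simp [S.comp_zero h]))
  refine S.conf_of_isDeflation_of_isLimit (S.isDeflation_of_isPullback hP ⟨A, i, h⟩)
    (KernelFork.IsLimit.ofι' _ (by simp) fun u hu => ?_)
  have hu₁ : (u ≫ p₁) ≫ d = (u ≫ p₁) ≫ 0 := by simp [hP.w, reassoc_of% hu]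
  exact ⟨Fork.IsLimit.lift (S.isLimitOfConf h) (u ≫ p₁) hu₁, hP.hom_ext (by simp) (by simp [hu])⟩

theorem conf_desc_of_isPushout {X Y Z W P : E} {i : X ⟶ Y} {d : Y ⟶ Z} (h : S.conf i d)
    {u : X ⟶ W} {g : Y ⟶ P} {j : W ⟶ P} (hP : IsPushout i u g j) :
    S.conf j (hP.desc d 0 (by simp [S.comp_zero h])) := by
  obtain ⟨P', j', g', hP', Z', d', h'⟩ := S.pushout_infl i u ⟨Z, d, h⟩
  have hj : S.IsInflation j := ⟨Z', (hP'.isoIsPushout _ _ hP).inv ≫ d',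
    by simpa using S.conf_iso (Iso.refl _) (hP'.isoIsPushout _ _ hP) (Iso.refl _) h'⟩
  have := S.epi_of_conf_s5 h
  have := epi_of_epi_fac (hP.inl_desc d 0 (by simp [S.comp_zero h]))
  refine S.conf_of_isInflation_of_isColimit hj
    (CokernelCofork.IsColimit.ofπ' _ (by simp) fun v hv => ?_)
  have hv₁ : i ≫ g ≫ v = 0 ≫ g ≫ v := by simp [reassoc_of% hP.w, hv]
  exact ⟨Cofork.IsColimit.desc (S.isColimitOfConf h) (g ≫ v) hv₁,
    hP.hom_ext (by simp) (by simp [hv])⟩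

theorem hasBinaryBiproducts (S : ExactStructure E) : HasBinaryBiproducts E := by
  have (X Y : E) : HasColimit (pair X Y) := by
    obtain ⟨P, j, g, hP, -⟩ :=
      S.pushout_infl (0 : (0 : E) ⟶ X) (0 : (0 : E) ⟶ Y) ⟨X, 𝟙 X, S.conf_id X⟩
    exact ⟨⟨_, BinaryCofan.IsColimit.mk (BinaryCofan.mk g j) (fun u v => hP.desc u v (by simp))
      (fun u v => hP.inl_desc u v _) (fun u v => hP.inr_desc u v _)
      (fun u v m h₁ h₂ =>
        hP.hom_ext (h₁.trans (hP.inl_desc u v _).symm) (h₂.trans (hP.inr_desc u v _).symm))⟩⟩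
  have := hasBinaryCoproducts_of_hasColimit_pair E
  exact .of_hasBinaryCoproducts

noncomputable def splittingOfConf {X Y Z : E} {i : X ⟶ Y} {d : Y ⟶ Z} (h : S.conf i d)
    (s : Z ⟶ Y) (hs : s ≫ d = 𝟙 Z) : (ShortComplex.mk i d (S.comp_zero h)).Splitting :=
  have hr : (𝟙 Y - d ≫ s) ≫ d = (𝟙 Y - d ≫ s) ≫ 0 := by simp [hs]
  have := S.mono_of_conf_s5 h
  { r := Fork.IsLimit.lift (S.isLimitOfConf h) (𝟙 Y - d ≫ s) hr
    s := s
    f_r := by simp [← cancel_mono i, reassoc_of% (S.comp_zero h)]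
    s_g := hs
    id := by simp }

theorem conf_of_isDeflation_snd_comp [HasBinaryBiproducts E] {A K B Z : E} {k : K ⟶ B}
    {f : B ⟶ Z} {w : k ≫ f = 0} (hk : IsLimit (KernelFork.ofι k w))
    (hf : S.IsDeflation ((biprod.snd : A ⊞ B ⟶ B) ≫ f)) : S.conf k f := by
  have hP := isPushout_biprod_map_id_snd A k
  convert S.conf_desc_of_isPushout
    (S.conf_of_isDeflation_of_isLimit hf (isLimitKernelForkBiprodMapId A hk)) hP
  exact hP.hom_ext (by simp) (by simp [w])

theorem isDeflation_of_isDeflation_left_of_conf {A B C A' B' : E} {i : A ⟶ B} {p : B ⟶ C}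
    {i' : A' ⟶ B'} {p' : B' ⟶ C} {f : B ⟶ B'} {a : A ⟶ A'} (hc : S.conf i p)
    (hc' : S.conf i' p') (hfp : f ≫ p' = p) (hsq : i ≫ f = a ≫ i') (ha : S.IsDeflation a) :
    S.IsDeflation f := by
  subst hfp
  have := S.hasBinaryBiproducts
  obtain ⟨Q, q₁, q₂, hQ, -⟩ := S.pullback_defl p' (f ≫ p') ⟨A', i', hc'⟩
  have hσ : hQ.lift f (𝟙 B) (by simp) ≫ q₂ = 𝟙 B := hQ.lift_snd _ _ _
  let split := S.splittingOfConf (S.conf_lift_of_isPullback hc' hQ) _ hσ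
  have hdesc : S.IsDeflation (biprod.desc i' f) := by
    have hq₁ : split.isoBinaryBiproduct.inv ≫ q₁ = biprod.desc i' f := by
      apply biprod.hom_ext' <;> simp [split, splittingOfConf]
    rw [← hq₁]
    exact S.isDeflation_iso_comp split.isoBinaryBiproduct.symm
      (S.isDeflation_of_isPullback hQ.flip ⟨A, i, hc⟩)
  have hsnd : S.IsDeflation ((biprod.snd : A ⊞ B ⟶ B) ≫ f) := by
    have hU : (Biprod.unipotentUpper i).hom ≫ biprod.snd = biprod.desc i (𝟙 B) := by
      apply biprod.hom_ext' <;> simp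
    have hcomp : biprod.map a (𝟙 B) ≫ biprod.desc i' f =
        (Biprod.unipotentUpper i).hom ≫ biprod.snd ≫ f := by
      rw [← Category.assoc, hU]
      apply biprod.hom_ext' <;> simp [hsq]
    have := S.defl_comp (S.isDeflation_of_isPullback (isPullback_fst_biprod_map_id a B) ha) hdesc
    rw [hcomp] at this
    simpa only [Iso.symm_hom, Iso.inv_hom_id_assoc] using
      S.isDeflation_iso_comp (Biprod.unipotentUpper i).symm this
  obtain ⟨K, κ, hκ⟩ := ha
  have := S.mono_of_conf_s5 hc'
  exact ⟨K, κ ≫ i, S.conf_of_isDeflation_snd_comp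
    (isKernelCompOfCommSq (S.isLimitOfConf hκ) (S.isLimitOfConf hc) hsq) hsnd⟩

end ExactStructure

/-- Given a commutative diagram in an exact category whose rows
`B' → B → B''` and `C' → C → C''` are conflations, if the outer vertical morphisms
`g' : B' ⟶ C'` and `g'' : B'' ⟶ C''` are deflations, then so is the middle one
`g : B ⟶ C`. -/
theorem deflation_in_the_middle
    (S : ExactStructure E) {B' B B'' C' C C'' : E}
    (iB : B' ⟶ B) (dB : B ⟶ B'') (iC : C' ⟶ C) (dC : C ⟶ C'')
    (g' : B' ⟶ C') (g : B ⟶ C) (g'' : B'' ⟶ C'')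
    (hB : S.conf iB dB) (hC : S.conf iC dC)
    (hsq₁ : iB ≫ g = g' ≫ iC) (hsq₂ : dB ≫ g'' = g ≫ dC)
    (hg' : S.IsDeflation g') (hg'' : S.IsDeflation g'') :
    S.IsDeflation g := by
  obtain ⟨P, p₁, p₂, hP, -⟩ := S.pullback_defl dC g'' ⟨C', iC, hC⟩
  have ht : S.IsDeflation (hP.lift g dB hsq₂.symm) :=
    S.isDeflation_of_isDeflation_left_of_conf hB (S.conf_lift_of_isPullback hC hP)
      (hP.lift_snd _ _ _) (hP.hom_ext (by simp [hsq₁]) (by simp [S.comp_zero hB])) hg'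
  rw [← hP.lift_fst g dB hsq₂.symm]
  exact S.defl_comp ht (S.isDeflation_of_isPullback hP.flip hg'')

end ExactCatPaper
end

section
/- Let q : A → B be a square-zero extension of additive categories with kernel bimodule K (i.e. q is essentially surjective, conservative, full, additive, and the composite of any two morphisms killed by q is zero). Then there is a B-bimodule M, unique up to unique isomorphism, such that K(A₁, A₂) ≅ M(q(A₁), q(A₂)) naturally in A₁, A₂. -/
/-!
Fix preimages `s b` of the objects of `B`. Because composites of two morphisms killed by `q`
vanish, `f ≫ φ ≫ g` with `φ` in the kernel depends only on `q f` and `q g`. Hence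
`M(b₁, b₂) := K(s b₁, s b₂)`, with `B` acting through arbitrary lifts along the full functor `q`,
is a `B`-bimodule, and composing with lifts of the isomorphisms `q (s (q A)) ≅ q A` identifies
`K(A₁, A₂)` with `M(q A₁, q A₂)`. Given another such pair `(M', e')`, the isomorphism `M ≅ M'`
is `e'` followed by transport along these isomorphisms. It is unique because each `e` is
bijective and, `q` being essentially surjective, a transformation of bimodules is determined by
its components at objects of the form `q A`.
-/

open CategoryTheory CategoryTheory.Limits Opposite

universe v₁ v₂ u₁ u₂

namespace SquareZeroKernel

variable {A : Type u₁} [Category.{v₁} A] [Preadditive A]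
variable {B : Type u₂} [Category.{v₂} B] [Preadditive B]

/-- The kernel of an additive functor `q` on a Hom-group: morphisms killed by `q`. -/
def qker (q : A ⥤ B) [q.Additive] (A₁ A₂ : A) : AddSubgroup (A₁ ⟶ A₂) where
  carrier := {φ | q.map φ = 0}
  add_mem' := by intro a b ha hb; simp only [Set.mem_setOf_eq] at *; rw [q.map_add, ha, hb, add_zero]
  zero_mem' := by simp only [Set.mem_setOf_eq]; exact q.map_zero _ _
  neg_mem' := by intro a ha; simp only [Set.mem_setOf_eq] at *; rw [q.map_neg, ha, neg_zero]

theorem mem_qker (q : A ⥤ B) [q.Additive] {A₁ A₂ : A} (φ : A₁ ⟶ A₂) :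
    φ ∈ qker q A₁ A₂ ↔ q.map φ = 0 := Iff.rfl

/-- Naturality of a family of identifications of the kernel of `q` with a
`B`-bimodule `M` (an additive bifunctor `Bᵒᵖ × B → Ab`, curried). -/
def KernelBimoduleIso (q : A ⥤ B) [q.Additive] (M : Bᵒᵖ ⥤ B ⥤ AddCommGrpCat.{v₁})
    (e : ∀ A₁ A₂ : A, qker q A₁ A₂ ≃+ (M.obj (op (q.obj A₁))).obj (q.obj A₂)) : Prop :=
  ∀ (A₁' A₁ A₂ A₂' : A) (f : A₁' ⟶ A₁) (g : A₂ ⟶ A₂') (φ : A₁ ⟶ A₂) (hφ : q.map φ = 0),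
    e A₁' A₂' ⟨f ≫ φ ≫ g, by
      rw [mem_qker, q.map_comp, q.map_comp, hφ, Limits.zero_comp, Limits.comp_zero]⟩ =
      (M.map (q.map f).op).app (q.obj A₂')
        ((M.obj (op (q.obj A₁))).map (q.map g) (e A₁ A₂ ⟨φ, hφ⟩))

theorem _root_.CategoryTheory.NatTrans.ext_of_essSurj {C D E : Type*} [Category C] [Category D]
    [Category E] (F : C ⥤ D) [F.EssSurj] {M N : D ⥤ E} {α β : M ⟶ N}
    (h : ∀ X : C, α.app (F.obj X) = β.app (F.obj X)) : α = β := by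
  ext Y
  rw [← cancel_epi (M.map (F.objObjPreimageIso Y).hom), α.naturality, β.naturality, h]

def IsSquareZero (q : A ⥤ B) : Prop :=
  ∀ ⦃X Y Z : A⦄ (f : X ⟶ Y) (g : Y ⟶ Z), q.map f = 0 → q.map g = 0 → f ≫ g = 0

section KernelMap

variable {q : A ⥤ B} [q.Additive]

def kerMap {X' X Y Y' : A} (f : X' ⟶ X) (g : Y ⟶ Y') : qker q X Y →+ qker q X' Y' where
  toFun φ := ⟨f ≫ φ.1 ≫ g, by rw [mem_qker, q.map_comp, q.map_comp, φ.2, zero_comp, comp_zero]⟩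
  map_zero' := Subtype.ext (by simp)
  map_add' φ ψ := Subtype.ext (by simp)

@[simp]
lemma coe_kerMap {X' X Y Y' : A} (f : X' ⟶ X) (g : Y ⟶ Y') (φ : qker q X Y) :
    (kerMap f g φ : X' ⟶ Y') = f ≫ φ ≫ g :=
  rfl

lemma kerMap_kerMap {X'' X' X Y Y' Y'' : A} (f : X'' ⟶ X') (f' : X' ⟶ X) (g : Y' ⟶ Y'')
    (g' : Y ⟶ Y') (φ : qker q X Y) :
    kerMap f g (kerMap f' g' φ) = kerMap (f ≫ f') (g' ≫ g) φ :=
  Subtype.ext (by simp)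

lemma kerMap_id {X Y : A} (φ : qker q X Y) : kerMap (𝟙 X) (𝟙 Y) φ = φ :=
  Subtype.ext (by simp)

lemma kerMap_add_left {X' X Y Y' : A} (f f' : X' ⟶ X) (g : Y ⟶ Y') (φ : qker q X Y) :
    kerMap (f + f') g φ = kerMap f g φ + kerMap f' g φ :=
  Subtype.ext (by simp [Preadditive.add_comp])

lemma kerMap_add_right {X' X Y Y' : A} (f : X' ⟶ X) (g g' : Y ⟶ Y') (φ : qker q X Y) :
    kerMap f (g + g') φ = kerMap f g φ + kerMap f g' φ :=
  Subtype.ext (by simp [Preadditive.comp_add])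

lemma kerMap_congr (hq : IsSquareZero q) {X' X Y Y' : A} {f f' : X' ⟶ X} {g g' : Y ⟶ Y'}
    (hf : q.map f = q.map f') (hg : q.map g = q.map g') (φ : qker q X Y) :
    kerMap f g φ = kerMap f' g' φ := by
  have hf0 : (f - f') ≫ φ.1 = 0 := hq _ _ (by rw [q.map_sub, hf, sub_self]) φ.2
  have hg0 : φ.1 ≫ (g - g') = 0 := hq _ _ φ.2 (by rw [q.map_sub, hg, sub_self])
  rw [Preadditive.sub_comp, sub_eq_zero] at hf0
  rw [Preadditive.comp_sub, sub_eq_zero] at hg0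
  exact Subtype.ext (by simp only [coe_kerMap, hg0, ← Category.assoc, hf0])

end KernelMap

section Construction

variable (q : A ⥤ B) [q.Full] [q.EssSurj]

noncomputable def sectionMap {b₁ b₂ : B} (f : b₁ ⟶ b₂) : q.objPreimage b₁ ⟶ q.objPreimage b₂ :=
  q.preimage ((q.objObjPreimageIso b₁).hom ≫ f ≫ (q.objObjPreimageIso b₂).inv)

set_option linter.unusedSectionVars false in
@[simp]
lemma map_sectionMap {b₁ b₂ : B} (f : b₁ ⟶ b₂) :
    q.map (sectionMap q f) = (q.objObjPreimageIso b₁).hom ≫ f ≫ (q.objObjPreimageIso b₂).inv :=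
  q.map_preimage _

variable {q} [q.Additive]

-- Reducible, so that rewriting sees its values as `AddCommGrpCat.of (qker q _ _)`.
noncomputable abbrev kernelBimodule (hq : IsSquareZero q) : Bᵒᵖ ⥤ B ⥤ AddCommGrpCat.{v₁} where
  obj b₁ :=
    { obj b₂ := .of (qker q (q.objPreimage b₁.unop) (q.objPreimage b₂))
      map g := AddCommGrpCat.ofHom (kerMap (𝟙 _) (sectionMap q g))
      map_id b₂ := by
        ext φ : 2
        refine (kerMap_congr hq rfl ?_ φ).trans (kerMap_id φ)
        simp
      map_comp g g' := by
        ext φ : 2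
        refine (kerMap_congr hq ?_ ?_ φ).trans (kerMap_kerMap _ _ _ _ φ).symm <;> simp }
  map f :=
    { app b₂ := AddCommGrpCat.ofHom (kerMap (sectionMap q f.unop) (𝟙 _))
      naturality b₂ b₂' g := by
        ext φ : 2
        simp [kerMap_kerMap] }
  map_id b₁ := by
    ext b₂ φ : 4
    refine (kerMap_congr hq ?_ rfl φ).trans (kerMap_id φ)
    simp
  map_comp f f' := by
    ext b₂ φ : 4
    refine (kerMap_congr hq ?_ ?_ φ).trans (kerMap_kerMap _ _ _ _ φ).symm <;> simp

instance (hq : IsSquareZero q) (b₁ : Bᵒᵖ) : ((kernelBimodule hq).obj b₁).Additive where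
  map_add {_ _ g g'} := by
    ext φ : 2
    refine (kerMap_congr hq rfl ?_ φ).trans (kerMap_add_right _ _ _ φ)
    simp [Preadditive.add_comp, Preadditive.comp_add]

instance (hq : IsSquareZero q) : (kernelBimodule hq).Additive where
  map_add {_ _ f f'} := by
    ext b₂ φ : 4
    refine (kerMap_congr hq ?_ rfl φ).trans (kerMap_add_left _ _ _ φ)
    simp [Preadditive.add_comp, Preadditive.comp_add]

noncomputable def kerEquivOfIso (hq : IsSquareZero q) {X' X Y Y' : A} (i : q.obj X' ≅ q.obj X)
    (j : q.obj Y ≅ q.obj Y') : qker q X Y ≃+ qker q X' Y' where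
  __ := kerMap (q.preimage i.hom) (q.preimage j.hom)
  invFun := kerMap (q.preimage i.inv) (q.preimage j.inv)
  left_inv φ := by
    refine (kerMap_kerMap _ _ _ _ φ).trans ((kerMap_congr hq ?_ ?_ φ).trans (kerMap_id φ)) <;> simp
  right_inv φ := by
    refine (kerMap_kerMap _ _ _ _ φ).trans ((kerMap_congr hq ?_ ?_ φ).trans (kerMap_id φ)) <;> simp

noncomputable def kernelEquiv (hq : IsSquareZero q) (A₁ A₂ : A) :
    qker q A₁ A₂ ≃+ ((kernelBimodule hq).obj (op (q.obj A₁))).obj (q.obj A₂) :=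
  kerEquivOfIso hq (q.objObjPreimageIso (q.obj A₁)) (q.objObjPreimageIso (q.obj A₂)).symm

lemma kernelBimoduleIso_kernelEquiv (hq : IsSquareZero q) :
    KernelBimoduleIso q (kernelBimodule hq) (kernelEquiv hq) := by
  intro A₁' A₁ A₂ A₂' f g φ hφ
  change kerMap _ _ (kerMap f g ⟨φ, hφ⟩) = kerMap (sectionMap q (q.map f)) (𝟙 _)
    (kerMap (𝟙 _) (sectionMap q (q.map g)) (kerMap _ _ ⟨φ, hφ⟩))
  simp only [kerMap_kerMap]
  exact kerMap_congr hq (by simp) (by simp) _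

end Construction

section Comparison

variable {q : A ⥤ B} [q.Additive] {M : Bᵒᵖ ⥤ B ⥤ AddCommGrpCat.{v₁}}
  {e : ∀ A₁ A₂ : A, qker q A₁ A₂ ≃+ (M.obj (op (q.obj A₁))).obj (q.obj A₂)}

lemma KernelBimoduleIso.ofHom_kerMap_comp (he : KernelBimoduleIso q M e) {X' X Y Y' : A}
    (f : X' ⟶ X) (g : Y ⟶ Y') :
    AddCommGrpCat.ofHom (kerMap f g) ≫ (AddEquiv.toAddCommGrpIso (X := .of _) (e X' Y')).hom =
      (AddEquiv.toAddCommGrpIso (X := .of _) (e X Y)).hom ≫ (M.obj _).map (q.map g) ≫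
        (M.map (q.map f).op).app _ := by
  ext φ : 2
  exact he X' X Y Y' f g φ.1 φ.2

variable [q.Full] [q.EssSurj] (hq : IsSquareZero q)

noncomputable def kernelBimoduleIsoOf (he : KernelBimoduleIso q M e) : kernelBimodule hq ≅ M :=
  NatIso.ofComponents
    (fun b₁ => NatIso.ofComponents
      (fun b₂ => AddEquiv.toAddCommGrpIso (X := .of (qker q _ _)) (e _ _) ≪≫
        (M.obj _).mapIso (q.objObjPreimageIso b₂) ≪≫
        (M.mapIso (q.objObjPreimageIso b₁.unop).symm.op).app b₂)
      (fun g => by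
        dsimp only [Iso.trans_hom]
        rw [reassoc_of% (he.ofHom_kerMap_comp (𝟙 _) (sectionMap q g))]
        simp))
    (fun f => by
      ext b₂ : 2
      dsimp only [NatTrans.comp_app, NatIso.ofComponents_hom_app, Iso.trans_hom]
      rw [reassoc_of% (he.ofHom_kerMap_comp (sectionMap q f.unop) (𝟙 _))]
      simp)

lemma kernelBimoduleIsoOf_hom_kernelEquiv (he : KernelBimoduleIso q M e) (A₁ A₂ : A)
    (φ : qker q A₁ A₂) :
    ((kernelBimoduleIsoOf hq he).hom.app (op (q.obj A₁))).app (q.obj A₂)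
      (kernelEquiv hq A₁ A₂ φ) = e A₁ A₂ φ := by
  have h : AddCommGrpCat.ofHom (kerMap (q.preimage (q.objObjPreimageIso (q.obj A₁)).hom)
      (q.preimage (q.objObjPreimageIso (q.obj A₂)).inv)) ≫
      ((kernelBimoduleIsoOf hq he).hom.app (op (q.obj A₁))).app (q.obj A₂) =
      (AddEquiv.toAddCommGrpIso (X := .of _) (e A₁ A₂)).hom := by
    dsimp only [kernelBimoduleIsoOf, NatIso.ofComponents_hom_app, Iso.trans_hom]
    rw [reassoc_of% (he.ofHom_kerMap_comp _ _)]
    simp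
  exact ConcreteCategory.congr_hom h φ

lemma eq_kernelBimoduleIsoOf (he : KernelBimoduleIso q M e) (η : kernelBimodule hq ≅ M)
    (hη : ∀ (A₁ A₂ : A) (φ : qker q A₁ A₂),
      (η.hom.app (op (q.obj A₁))).app (q.obj A₂) (kernelEquiv hq A₁ A₂ φ) = e A₁ A₂ φ) :
    η = kernelBimoduleIsoOf hq he := by
  refine Iso.ext (NatTrans.ext_of_essSurj q.op fun A₁ => NatTrans.ext_of_essSurj q fun A₂ => ?_)
  ext ψ : 2
  obtain ⟨φ, rfl⟩ := (kernelEquiv hq A₁.unop A₂).surjective ψ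
  exact (hη _ _ φ).trans (kernelBimoduleIsoOf_hom_kernelEquiv hq he _ _ φ).symm

end Comparison

theorem squareZero_kernel_bimodule_general
    (q : A ⥤ B) [q.Additive] [q.Full] [q.EssSurj]
    (hsq : ∀ {X Y Z : A} (f : X ⟶ Y) (g : Y ⟶ Z), q.map f = 0 → q.map g = 0 → f ≫ g = 0) :
    ∃ (M : Bᵒᵖ ⥤ B ⥤ AddCommGrpCat.{v₁}) (_ : M.Additive) (_ : ∀ b : Bᵒᵖ, (M.obj b).Additive)
      (e : ∀ A₁ A₂ : A, qker q A₁ A₂ ≃+ (M.obj (op (q.obj A₁))).obj (q.obj A₂)),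
      KernelBimoduleIso q M e ∧
      ∀ (M' : Bᵒᵖ ⥤ B ⥤ AddCommGrpCat.{v₁}), M'.Additive → (∀ b : Bᵒᵖ, (M'.obj b).Additive) →
        ∀ (e' : ∀ A₁ A₂ : A, qker q A₁ A₂ ≃+ (M'.obj (op (q.obj A₁))).obj (q.obj A₂)),
          KernelBimoduleIso q M' e' →
          ∃! η : M ≅ M', ∀ (A₁ A₂ : A) (φ : A₁ ⟶ A₂) (hφ : q.map φ = 0),
            (η.hom.app (op (q.obj A₁))).app (q.obj A₂) (e A₁ A₂ ⟨φ, hφ⟩) =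
              e' A₁ A₂ ⟨φ, hφ⟩ := by
  have hq : IsSquareZero q := fun _ _ _ f g => hsq f g
  refine ⟨kernelBimodule hq, inferInstance, inferInstance, kernelEquiv hq,
    kernelBimoduleIso_kernelEquiv hq, fun M' _ _ e' he' => ⟨kernelBimoduleIsoOf hq he', ?_, ?_⟩⟩
  · exact fun A₁ A₂ φ hφ => kernelBimoduleIsoOf_hom_kernelEquiv hq he' A₁ A₂ ⟨φ, hφ⟩
  · exact fun η hη => eq_kernelBimoduleIsoOf hq he' η fun A₁ A₂ φ => hη A₁ A₂ φ.1 φ.2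

/-- Let `q : A → B` be a square-zero extension of additive categories
(`q` is essentially surjective, conservative, full, additive, and the composite of any
two morphisms killed by `q` is zero) with kernel bimodule `K`. Then there is a
`B`-bimodule `M` (an additive bifunctor `Bᵒᵖ × B → Ab`), unique up to unique
isomorphism, such that `K(A₁, A₂) ≅ M(q(A₁), q(A₂))` naturally in `A₁`, `A₂`. -/
theorem squareZero_kernel_bimodule
    (q : A ⥤ B) [q.Additive] [q.Full] [q.EssSurj] [q.ReflectsIsomorphisms]
    (hsq : ∀ {X Y Z : A} (f : X ⟶ Y) (g : Y ⟶ Z), q.map f = 0 → q.map g = 0 → f ≫ g = 0) :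
    ∃ (M : Bᵒᵖ ⥤ B ⥤ AddCommGrpCat.{v₁}) (_ : M.Additive) (_ : ∀ b : Bᵒᵖ, (M.obj b).Additive)
      (e : ∀ A₁ A₂ : A, qker q A₁ A₂ ≃+ (M.obj (op (q.obj A₁))).obj (q.obj A₂)),
      KernelBimoduleIso q M e ∧
      ∀ (M' : Bᵒᵖ ⥤ B ⥤ AddCommGrpCat.{v₁}), M'.Additive → (∀ b : Bᵒᵖ, (M'.obj b).Additive) →
        ∀ (e' : ∀ A₁ A₂ : A, qker q A₁ A₂ ≃+ (M'.obj (op (q.obj A₁))).obj (q.obj A₂)),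
          KernelBimoduleIso q M' e' →
          ∃! η : M ≅ M', ∀ (A₁ A₂ : A) (φ : A₁ ⟶ A₂) (hφ : q.map φ = 0),
            (η.hom.app (op (q.obj A₁))).app (q.obj A₂) (e A₁ A₂ ⟨φ, hφ⟩) =
              e' A₁ A₂ ⟨φ, hφ⟩ :=
  squareZero_kernel_bimodule_general q hsq

end SquareZeroKernel
end

section
/- Let E be an exact category with a perpendicular torsion pair (T, F). Then E is weakly idempotent split if and only if both T and F are weakly idempotent split. -/
/-!
If `E` is weakly idempotent split, the kernel of a retraction in `T` (resp. `F`) is a retract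
of an object of `T` (resp. `F`), and torsion and torsion-free classes are closed under retracts
because `Hom(T, F) = 0`.

Conversely, a retraction `r : X ⟶ Y` with section `s` induces retractions `tX ⟶ tY` and
`fX ⟶ fY` on torsion and torsion-free parts, whose kernels `Kt ∈ T` and `Kf ∈ F` are direct
summands. Pulling the conflation `tX ⟶ X ⟶ fX` back along `Kf ⟶ fX` gives an extension `P`
of `Kf` by `tX` through which every morphism killed by `r` factors, and `r` corestricts to a
retraction `ρ : P ⟶ tY`. Pushing `P` out along the projection `tX ⟶ Kt` splits off the
complement of the section `tY ⟶ tX ⟶ P` of `ρ`, i.e. produces the kernel of `ρ`, and this is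
then the kernel of `r`.
-/

open CategoryTheory CategoryTheory.Limits ZeroObject

universe v u

namespace ExactCatPaper

variable (E : Type u) [Category.{v} E] [Preadditive E] [HasZeroObject E]

variable {E}

/-- A full subcategory (as a class of objects) closed under isomorphisms. -/
def IsoClosed (T : Set E) : Prop := ∀ {X Y : E}, (X ≅ Y) → X ∈ T → Y ∈ T

/-- The full subcategory on `T` is weakly idempotent split: every retraction between
objects of `T` has a kernel in `T`. -/
def WeaklyIdemSplitOn (T : Set E) : Prop :=
  ∀ {X Y : E}, X ∈ T → Y ∈ T → ∀ (r : X ⟶ Y) (s : Y ⟶ X), s ≫ r = 𝟙 Y →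
    ∃ (K : E) (k : K ⟶ X), K ∈ T ∧ k ≫ r = 0 ∧
      ∀ {W : E}, W ∈ T → ∀ f : W ⟶ X, f ≫ r = 0 → ∃! g : W ⟶ K, g ≫ k = f

section Kernels

variable {C : Type*} [Category C] [Preadditive C]

def IsKernelOn (T : Set C) {K X Y : C} (k : K ⟶ X) (r : X ⟶ Y) : Prop :=
  k ≫ r = 0 ∧ ∀ {W : C}, W ∈ T → ∀ f : W ⟶ X, f ≫ r = 0 → ∃! g : W ⟶ K, g ≫ k = f

variable {T : Set C} {K X Y : C} {k : K ⟶ X} {r : X ⟶ Y} {s : Y ⟶ X}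

lemma IsKernelOn.exists_retraction (hk : IsKernelOn T k r) (hX : X ∈ T) (hK : K ∈ T)
    (hs : s ≫ r = 𝟙 Y) : ∃ π : X ⟶ K, k ≫ π = 𝟙 K ∧ π ≫ k = 𝟙 X - r ≫ s := by
  obtain ⟨hk0, hlift⟩ := hk
  obtain ⟨π, hπ, -⟩ := hlift hX (𝟙 X - r ≫ s) (by simp [hs])
  refine ⟨π, (hlift hK k hk0).unique ?_ (Category.id_comp k), hπ⟩
  simp [hπ, reassoc_of% hk0]

lemma isKernelOn_univ_of_split {π : X ⟶ K} (hs : s ≫ r = 𝟙 Y) (hkπ : k ≫ π = 𝟙 K)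
    (hπk : π ≫ k = 𝟙 X - r ≫ s) : IsKernelOn Set.univ k r := by
  have : Mono k := (SplitMono.mk π hkπ).mono
  have : Epi π := (SplitEpi.mk k hkπ).epi
  refine ⟨?_, fun {W} _ f hf => ⟨f ≫ π, ?_, fun g hg => ?_⟩⟩
  · rw [← cancel_epi π, ← Category.assoc, hπk]
    simp [hs]
  · simp [hπk, reassoc_of% hf]
  · rw [← cancel_mono k, hg, Category.assoc, hπk]
    simp [reassoc_of% hf]

lemma IsKernelOn.comp_of_factors {P B : C} {k : K ⟶ P} {ρ : P ⟶ B} {p : P ⟶ X} {i : B ⟶ Y}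
    [Mono p] [Mono i] (hk : IsKernelOn Set.univ k ρ) (hρ : ρ ≫ i = p ≫ r)
    (hfac : ∀ {W : C} (w : W ⟶ X), w ≫ r = 0 → ∃ v : W ⟶ P, v ≫ p = w) :
    IsKernelOn Set.univ (k ≫ p) r := by
  obtain ⟨hk0, hlift⟩ := hk
  refine ⟨by rw [Category.assoc, ← hρ, reassoc_of% hk0, zero_comp], fun {W} _ w hw => ?_⟩
  obtain ⟨v, rfl⟩ := hfac w hw
  have hvρ : v ≫ ρ = 0 := by rw [← cancel_mono i, Category.assoc, hρ, ← Category.assoc, hw,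
    zero_comp]
  obtain ⟨g, hg, huniq⟩ := hlift (Set.mem_univ W) v hvρ
  refine ⟨g, show g ≫ k ≫ p = v ≫ p by rw [reassoc_of% hg], fun g' (hg' : g' ≫ k ≫ p = v ≫ p) =>
    huniq g' ?_⟩
  change g' ≫ k = v
  rwa [← cancel_mono p, Category.assoc]

lemma WeaklyIdemSplitOn.exists_splitting (hT : WeaklyIdemSplitOn T) (hX : X ∈ T) (hY : Y ∈ T)
    (hs : s ≫ r = 𝟙 Y) :
    ∃ (K : C) (k : K ⟶ X) (π : X ⟶ K), k ≫ π = 𝟙 K ∧ π ≫ k = 𝟙 X - r ≫ s := by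
  obtain ⟨K, k, hK, hk⟩ := hT hX hY r s hs
  obtain ⟨π, hkπ, hπk⟩ := IsKernelOn.exists_retraction (T := T) hk hX hK hs
  exact ⟨K, k, π, hkπ, hπk⟩

lemma WeaklyIdemSplitOn.of_univ (hE : WeaklyIdemSplitOn (Set.univ : Set C))
    (hT : ∀ {K X : C}, Retract K X → X ∈ T → K ∈ T) : WeaklyIdemSplitOn T := by
  intro X Y hX _ r s hs
  obtain ⟨K, k, π, hkπ, hπk⟩ := hE.exists_splitting (Set.mem_univ X) (Set.mem_univ Y) hs
  obtain ⟨hk, hlift⟩ := isKernelOn_univ_of_split hs hkπ hπk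
  exact ⟨K, k, hT ⟨k, π, hkπ⟩ hX, hk, fun {W} _ => hlift (Set.mem_univ W)⟩

lemma exists_splitting_of_isPushout {A B P K P' : C} {j : A ⟶ P} {ρ : P ⟶ B} {σ : B ⟶ A}
    {k : K ⟶ A} {π : A ⟶ K} {g : P ⟶ P'} {j' : K ⟶ P'} (hσ : σ ≫ j ≫ ρ = 𝟙 B)
    (hkπ : k ≫ π = 𝟙 K) (hπk : π ≫ k = 𝟙 A - (j ≫ ρ) ≫ σ) (hPO : IsPushout j π g j') :
    ∃ k' : P' ⟶ P, k' ≫ g = 𝟙 P' ∧ g ≫ k' = 𝟙 P - ρ ≫ σ ≫ j := by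
  have hσπ : σ ≫ π = 0 := calc
    σ ≫ π = σ ≫ (π ≫ k) ≫ π := by rw [Category.assoc, hkπ, Category.comp_id]
    _ = 0 := by simp [hπk, reassoc_of% hσ]
  obtain ⟨k', hgk', hj'k'⟩ : ∃ k' : P' ⟶ P, g ≫ k' = 𝟙 P - ρ ≫ σ ≫ j ∧ j' ≫ k' = k ≫ j :=
    ⟨hPO.desc _ _ (by simp [reassoc_of% hπk]), hPO.inl_desc _ _ _, hPO.inr_desc _ _ _⟩
  refine ⟨k', hPO.hom_ext ?_ ?_, hgk'⟩
  · simp [reassoc_of% hgk', hPO.w, reassoc_of% hσπ]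
  · simp [reassoc_of% hj'k', hPO.w, reassoc_of% hkπ]

end Kernels

namespace ExactStructure

variable {S : ExactStructure E} {X Y Z : E} {i : X ⟶ Y} {d : Y ⟶ Z}

lemma mono_infl (hc : S.conf i d) : Mono i :=
  ⟨fun a b hab => by
    obtain ⟨g, -, hg⟩ := S.is_kernel hc (b ≫ i) (by simp [S.comp_zero hc])
    rw [hg a hab, hg b rfl]⟩

lemma epi_defl (hc : S.conf i d) : Epi d :=
  ⟨fun a b hab => by
    obtain ⟨g, -, hg⟩ := S.is_cokernel hc (d ≫ b) (by simp [reassoc_of% S.comp_zero hc])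
    rw [hg a hab, hg b rfl]⟩

lemma isIso_infl_of_defl_eq_zero (hc : S.conf i d) (hd : d = 0) : IsIso i := by
  have := mono_infl hc
  obtain ⟨u, hu, -⟩ := S.is_kernel hc (𝟙 Y) (by simp [hd])
  exact ⟨u, by rw [← cancel_mono i, Category.assoc, hu, Category.comp_id, Category.id_comp], hu⟩

lemma isIso_defl_of_infl_eq_zero (hc : S.conf i d) (hi : i = 0) : IsIso d := by
  have := epi_defl hc
  obtain ⟨v, hv, -⟩ := S.is_cokernel hc (𝟙 Y) (by simp [hi])
  exact ⟨v, hv, by rw [← cancel_epi d, reassoc_of% hv, Category.comp_id]⟩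

lemma conf_of_mono_of_factors {X' : E} (hc : S.conf i d) {a : X ⟶ X'} {i' : X' ⟶ Y} [Mono i']
    (ha : a ≫ i' = i) (hi' : i' ≫ d = 0) : S.conf i' d := by
  have := mono_infl hc
  obtain ⟨b, hb, -⟩ := S.is_kernel hc i' hi'
  have hab : a ≫ b = 𝟙 X := by rw [← cancel_mono i, Category.assoc, hb, ha, Category.id_comp]
  have hba : b ≫ a = 𝟙 X' := by rw [← cancel_mono i', Category.assoc, ha, hb, Category.id_comp]
  simpa [hb] using S.conf_iso ⟨a, b, hab, hba⟩ (Iso.refl Y) (Iso.refl Z) hc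

lemma exists_conf_isPullback (hc : S.conf i d) {W : E} (f : W ⟶ Z) :
    ∃ (P : E) (p₁ : P ⟶ Y) (p₂ : P ⟶ W) (j : X ⟶ P),
      IsPullback p₁ p₂ d f ∧ j ≫ p₁ = i ∧ j ≫ p₂ = 0 ∧ S.conf j p₂ := by
  obtain ⟨P, p₁, p₂, hPB, A, i₀, hc₀⟩ := S.pullback_defl d f ⟨X, i, hc⟩
  let j : X ⟶ P := hPB.lift i 0 (by simp [S.comp_zero hc])
  have hj₁ : j ≫ p₁ = i := hPB.lift_fst _ _ _
  have hj₂ : j ≫ p₂ = 0 := hPB.lift_snd _ _ _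
  have : Mono i := mono_infl hc
  have : Mono j := mono_of_mono_fac hj₁
  obtain ⟨a, ha, -⟩ := S.is_kernel hc (i₀ ≫ p₁)
    (by rw [Category.assoc, hPB.w, reassoc_of% S.comp_zero hc₀, zero_comp])
  have haj : a ≫ j = i₀ := hPB.hom_ext (by rw [Category.assoc, hj₁, ha])
    (by rw [Category.assoc, hj₂, Limits.comp_zero, S.comp_zero hc₀])
  exact ⟨P, p₁, p₂, j, hPB, hj₁, hj₂, conf_of_mono_of_factors hc₀ haj hj₂⟩

lemma exists_retraction_restrict {X' Y' Z' : E} {i' : X' ⟶ Y'} {d' : Y' ⟶ Z'}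
    (hc : S.conf i d) (hc' : S.conf i' d') {r : Y ⟶ Y'} {s : Y' ⟶ Y} (hs : s ≫ r = 𝟙 Y')
    (hr : i ≫ r ≫ d' = 0) (hs' : i' ≫ s ≫ d = 0) :
    ∃ (r₀ : X ⟶ X') (s₀ : X' ⟶ X), r₀ ≫ i' = i ≫ r ∧ s₀ ≫ r₀ = 𝟙 X' := by
  have := mono_infl hc'
  obtain ⟨r₀, hr₀, -⟩ := S.is_kernel hc' (i ≫ r) (by rwa [Category.assoc])
  obtain ⟨s₀, hs₀, -⟩ := S.is_kernel hc (i' ≫ s) (by rwa [Category.assoc])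
  exact ⟨r₀, s₀, hr₀, by rw [← cancel_mono i', Category.assoc, hr₀, reassoc_of% hs₀, hs,
    Category.comp_id, Category.id_comp]⟩

lemma exists_retraction_corestrict {X' Y' Z' : E} {i' : X' ⟶ Y'} {d' : Y' ⟶ Z'}
    (hc : S.conf i d) (hc' : S.conf i' d') {r : Y ⟶ Y'} {s : Y' ⟶ Y} (hs : s ≫ r = 𝟙 Y')
    (hr : i ≫ r ≫ d' = 0) (hs' : i' ≫ s ≫ d = 0) :
    ∃ (r₀ : Z ⟶ Z') (s₀ : Z' ⟶ Z), d ≫ r₀ = r ≫ d' ∧ s₀ ≫ r₀ = 𝟙 Z' := by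
  have := epi_defl hc'
  obtain ⟨r₀, hr₀, -⟩ := S.is_cokernel hc (r ≫ d') hr
  obtain ⟨s₀, hs₀, -⟩ := S.is_cokernel hc' (s ≫ d) hs'
  exact ⟨r₀, s₀, hr₀, by rw [← cancel_epi d', reassoc_of% hs₀, hr₀, reassoc_of% hs,
    Category.comp_id]⟩

end ExactStructure

namespace IsTorsionPair

variable {S : ExactStructure E} {T F : Set E} {K X : E}

lemma mem_left_of_retract (hTF : IsTorsionPair S T F) (hT : IsoClosed T) (e : Retract K X)
    (hX : X ∈ T) : K ∈ T := by
  obtain ⟨t, f, i, d, ht, hf, hc⟩ := hTF.2 K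
  have hd : d = 0 := by rw [← Category.id_comp d, ← e.retract, Category.assoc,
    hTF.1 X hX f hf (e.r ≫ d), comp_zero]
  have := ExactStructure.isIso_infl_of_defl_eq_zero hc hd
  exact hT (asIso i) ht

lemma mem_right_of_retract (hTF : IsTorsionPair S T F) (hF : IsoClosed F) (e : Retract K X)
    (hX : X ∈ F) : K ∈ F := by
  obtain ⟨t, f, i, d, ht, hf, hc⟩ := hTF.2 K
  have hi : i = 0 := by rw [← Category.comp_id i, ← e.retract, ← Category.assoc,
    hTF.1 t ht X hX (i ≫ e.i), zero_comp]
  have := ExactStructure.isIso_defl_of_infl_eq_zero hc hi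
  exact hF (asIso d).symm hf

lemma weaklyIdemSplitOn_univ (hTF : IsTorsionPair S T F) (hT : WeaklyIdemSplitOn T)
    (hF : WeaklyIdemSplitOn F) : WeaklyIdemSplitOn (Set.univ : Set E) := by
  intro X Y _ _ r s hs
  obtain ⟨tX, fX, iX, dX, htX, hfX, hcX⟩ := hTF.2 X
  obtain ⟨tY, fY, iY, dY, htY, hfY, hcY⟩ := hTF.2 Y
  have hr := hTF.1 _ htX _ hfY (iX ≫ r ≫ dY)
  have hs' := hTF.1 _ htY _ hfX (iY ≫ s ≫ dX)
  obtain ⟨tr, ts, htr, htsr⟩ := ExactStructure.exists_retraction_restrict hcX hcY hs hr hs'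
  obtain ⟨fr, fs, hfr, hfsr⟩ := ExactStructure.exists_retraction_corestrict hcX hcY hs hr hs'
  obtain ⟨Kt, kt, πt, hktπ, hπkt⟩ := hT.exists_splitting htX htY htsr
  obtain ⟨Kf, kf, πf, hkfπ, hπkf⟩ := hF.exists_splitting hfX hfY hfsr
  have hkerf := isKernelOn_univ_of_split hfsr hkfπ hπkf
  -- `P` is the extension of `Kf` by `tX` inside `X`; it contains the kernel of `r`.
  obtain ⟨P, p₁, p₂, ti, hPB, hti₁, hti₂, hcP⟩ := ExactStructure.exists_conf_isPullback hcX kf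
  have : Mono iY := ExactStructure.mono_infl hcY
  have : Mono kf := (SplitMono.mk πf hkfπ).mono
  have : Mono p₁ := hPB.mono_fst_of_mono
  obtain ⟨ρ, hρ, -⟩ := S.is_kernel hcY (p₁ ≫ r)
    (by rw [Category.assoc, ← hfr, ← Category.assoc, hPB.w, Category.assoc, hkerf.1, comp_zero])
  have htiρ : ti ≫ ρ = tr := by rw [← cancel_mono iY, Category.assoc, hρ, reassoc_of% hti₁, htr]
  obtain ⟨P', j', g, hPO, -⟩ := S.pushout_infl ti πt ⟨Kf, p₂, hcP⟩
  obtain ⟨k', hk'g, hgk'⟩ := exists_splitting_of_isPushout (σ := ts) (by rw [htiρ, htsr]) hktπ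
    (by rw [htiρ, hπkt]) hPO
  have hkerρ := isKernelOn_univ_of_split (s := ts ≫ ti) (by rw [Category.assoc, htiρ, htsr])
    hk'g hgk'
  have hker := hkerρ.comp_of_factors hρ fun w hw => by
    obtain ⟨u, hu, -⟩ := hkerf.2 (Set.mem_univ _) (w ≫ dX)
      (by rw [Category.assoc, hfr, reassoc_of% hw, zero_comp])
    exact ⟨hPB.lift w u hu.symm, hPB.lift_fst _ _ _⟩
  exact ⟨P', k' ≫ p₁, Set.mem_univ _, hker⟩

end IsTorsionPair

theorem weaklyIdemSplit_iff_torsion_parts_general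
    (S : ExactStructure E) (T F : Set E)
    (hTiso : IsoClosed T) (hFiso : IsoClosed F)
    (h : IsPerpTorsionPair S T F) :
    WeaklyIdemSplitOn (Set.univ : Set E) ↔ (WeaklyIdemSplitOn T ∧ WeaklyIdemSplitOn F) :=
  ⟨fun hE => ⟨hE.of_univ (h.1.mem_left_of_retract hTiso),
      hE.of_univ (h.1.mem_right_of_retract hFiso)⟩,
    fun ⟨hT, hF⟩ => h.1.weaklyIdemSplitOn_univ hT hF⟩

/-- Let `E` be an exact category with a perpendicular torsion pair
`(T, F)`. Then `E` is weakly idempotent split if and only if both `T` and `F` are. -/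
theorem weaklyIdemSplit_iff_torsion_parts
    (S : ExactStructure E) (T F : Set E)
    (hText : ExtClosed S T) (hTiso : IsoClosed T)
    (hFext : ExtClosed S F) (hFiso : IsoClosed F)
    (h : IsPerpTorsionPair S T F) :
    WeaklyIdemSplitOn (Set.univ : Set E) ↔ (WeaklyIdemSplitOn T ∧ WeaklyIdemSplitOn F) :=
  weaklyIdemSplit_iff_torsion_parts_general S T F hTiso hFiso h

end ExactCatPaper
end

section
/- Let T ≃ k-vect be a right admissible subcategory of a k-linear Ext¹-finite exact category E, with irreducible object T₀, and let Q be a projective object of the perpendicular exact category T^{⊥}. Then the universal extension R of Q by T₀, i.e. the middle term of the conflation T₀ ⊗ Ext¹(Q,T₀)^∨ → R → Q given by the canonical class, is a projective object of E, and T₀ itself is projective in E. -/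
/-!
Write `Ext¹(Z, X) = 0` when every conflation `X → M → Z` splits. An object `P` is projective as
soon as `Ext¹(P, -) = 0`, and since every object is an extension of an object of `T^⊥` by one of
`T`, half-exactness of `Ext¹(P, -)` reduces this to `Ext¹(P, T) = 0 = Ext¹(P, T^⊥)`.

For `P = T₀`, `Ext¹(T₀, T^⊥) = 0` by definition, and a self-extension of `T₀` lies in
`T ≃ k-vect`, so it splits because `End T₀ = k`.

For `P = R`, exactness of `Ext¹(Q, X) → Ext¹(R, X) → Ext¹(T', X)` with `Ext¹(T', X) = 0`
shows that it suffices that `p` lift along every extension of `Q` by `X`. For `X = T₀` this is the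
universality of `R`; for `X ∈ T^⊥` the extension lies in `T^⊥`, where `Q` is projective.
-/

open CategoryTheory CategoryTheory.Limits ZeroObject

universe v u

namespace ExactCatPaper

variable (E : Type u) [Category.{v} E] [Preadditive E] [HasZeroObject E]

variable {E}

variable {S : ExactStructure E}

/-- `Ext¹(Z, X) = 0`: every conflation `X → M → Z` splits. -/
def ExactStructure.ExtVanishes (S : ExactStructure E) (Z X : E) : Prop :=
  ∀ (M : E) (i : X ⟶ M) (d : M ⟶ Z), S.conf i d → ∃ r : M ⟶ X, i ≫ r = 𝟙 X

def ExactStructure.IsProjective (S : ExactStructure E) (P : E) : Prop :=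
  ∀ {Y Z : E} (d : Y ⟶ Z), S.IsDeflation d → ∀ f : P ⟶ Z, ∃ g : P ⟶ Y, g ≫ d = f

lemma mono_of_conf {X Y Z : E} {i : X ⟶ Y} {d : Y ⟶ Z} (h : S.conf i d) : Mono i :=
  ⟨fun a b hab => by
    obtain ⟨g, -, huniq⟩ := S.is_kernel h (a ≫ i)
      (by rw [Category.assoc, S.comp_zero h, comp_zero])
    rw [huniq a rfl, huniq b hab.symm]⟩

lemma epi_of_conf {X Y Z : E} {i : X ⟶ Y} {d : Y ⟶ Z} (h : S.conf i d) : Epi d :=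
  ⟨fun a b hab => by
    obtain ⟨g, -, huniq⟩ := S.is_cokernel h (d ≫ a)
      (by rw [← Category.assoc, S.comp_zero h, zero_comp])
    rw [huniq a rfl, huniq b hab.symm]⟩

lemma conf_of_isKernel {K X Y Z : E} {κ : K ⟶ Y} {d : Y ⟶ Z} (h : S.conf κ d)
    {i : X ⟶ Y} (hi : i ≫ d = 0)
    (huniv : ∀ {W : E} (f : W ⟶ Y), f ≫ d = 0 → ∃! g : W ⟶ X, g ≫ i = f) :
    S.conf i d := by
  obtain ⟨v, hv, -⟩ := S.is_kernel h i hi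
  obtain ⟨w, hw, -⟩ := huniv κ (S.comp_zero h)
  have hvw : v ≫ w = 𝟙 X := by
    obtain ⟨_, _, huniq⟩ := huniv i hi
    rw [huniq (v ≫ w) (by simp only [Category.assoc, hw, hv]),
      huniq (𝟙 X) (Category.id_comp i)]
  have hwv : w ≫ v = 𝟙 K :=
    (mono_of_conf h).right_cancellation _ _ (by rw [Category.assoc, hv, hw, Category.id_comp])
  simpa [hv] using S.conf_iso (Iso.mk w v hwv hvw) (Iso.refl Y) (Iso.refl Z) h

lemma conf_of_isCokernel {X Y Z Z' : E} {i : X ⟶ Y} {δ : Y ⟶ Z'} (h : S.conf i δ)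
    {d : Y ⟶ Z} (hd : i ≫ d = 0)
    (huniv : ∀ {W : E} (f : Y ⟶ W), i ≫ f = 0 → ∃! g : Z ⟶ W, d ≫ g = f) :
    S.conf i d := by
  obtain ⟨v, hv, -⟩ := huniv δ (S.comp_zero h)
  obtain ⟨w, hw, -⟩ := S.is_cokernel h d hd
  have hvw : v ≫ w = 𝟙 Z := by
    obtain ⟨_, _, huniq⟩ := huniv d hd
    rw [huniq (v ≫ w) (by simp only [← Category.assoc, hv, hw]),
      huniq (𝟙 Z) (Category.comp_id d)]
  have hwv : w ≫ v = 𝟙 Z' :=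
    (epi_of_conf h).left_cancellation _ _ (by rw [← Category.assoc, hw, hv, Category.comp_id])
  simpa [hw] using S.conf_iso (Iso.refl X) (Iso.refl Y) (Iso.mk w v hwv hvw) h

lemma exists_conf_pushout {X Y Z W : E} {i : X ⟶ Y} {d : Y ⟶ Z} (h : S.conf i d)
    (f : X ⟶ W) :
    ∃ (P : E) (g : Y ⟶ P) (j : W ⟶ P) (d' : P ⟶ Z),
      S.conf j d' ∧ i ≫ g = f ≫ j ∧ g ≫ d' = d := by
  obtain ⟨P, j, g, hPO, Z', δ, hjδ⟩ := S.pushout_infl i f ⟨Z, d, h⟩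
  have hw : i ≫ d = f ≫ (0 : W ⟶ Z) := by rw [S.comp_zero h, comp_zero]
  have hg : g ≫ hPO.desc d 0 hw = d := hPO.inl_desc d 0 hw
  have hj : j ≫ hPO.desc d 0 hw = 0 := hPO.inr_desc d 0 hw
  refine ⟨P, g, j, hPO.desc d 0 hw, conf_of_isCokernel hjδ hj fun φ hφ => ?_, hPO.w, hg⟩
  obtain ⟨t, ht, -⟩ := S.is_cokernel h (g ≫ φ)
    (by rw [← Category.assoc, hPO.w, Category.assoc, hφ, comp_zero])
  refine ⟨t, hPO.hom_ext (by rw [← Category.assoc, hg, ht])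
      (by rw [← Category.assoc, hj, zero_comp, hφ]),
    fun t' ht' => (epi_of_conf h).left_cancellation _ _ ?_⟩
  rw [ht, ← hg, Category.assoc, ht']

lemma exists_conf_pullback {X Y Z W : E} {i : X ⟶ Y} {d : Y ⟶ Z} (h : S.conf i d)
    (f : W ⟶ Z) :
    ∃ (P : E) (p₁ : P ⟶ Y) (p₂ : P ⟶ W) (i' : X ⟶ P),
      IsPullback p₁ p₂ d f ∧ S.conf i' p₂ ∧ i' ≫ p₁ = i := by
  obtain ⟨P, p₁, p₂, sq, A, κ, hκ⟩ := S.pullback_defl d f ⟨X, i, h⟩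
  have hw : i ≫ d = (0 : X ⟶ W) ≫ f := by rw [S.comp_zero h, zero_comp]
  have h₁ : sq.lift i 0 hw ≫ p₁ = i := sq.lift_fst i 0 hw
  have h₂ : sq.lift i 0 hw ≫ p₂ = 0 := sq.lift_snd i 0 hw
  refine ⟨P, p₁, p₂, sq.lift i 0 hw, sq, conf_of_isKernel hκ h₂ fun φ hφ => ?_, h₁⟩
  obtain ⟨t, ht, -⟩ := S.is_kernel h (φ ≫ p₁)
    (by rw [Category.assoc, sq.w, ← Category.assoc, hφ, zero_comp])
  refine ⟨t, sq.hom_ext (by rw [Category.assoc, h₁, ht])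
      (by rw [Category.assoc, h₂, comp_zero, hφ]),
    fun t' ht' => (mono_of_conf h).right_cancellation _ _ ?_⟩
  rw [ht, ← h₁, ← Category.assoc, ht']

lemma conf_comp_of_isPullback {X W R T' Q V : E} {a : X ⟶ W} {e : W ⟶ R} (hae : S.conf a e)
    {u : T' ⟶ R} {p : R ⟶ Q} (hup : S.conf u p)
    {v₁ : V ⟶ W} {v₂ : V ⟶ T'} (sq : IsPullback v₁ v₂ e u) :
    S.conf v₁ (e ≫ p) := by
  obtain ⟨K, κ, hκ⟩ := S.defl_comp ⟨X, a, hae⟩ ⟨T', u, hup⟩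
  refine conf_of_isKernel hκ (by rw [← Category.assoc, sq.w, Category.assoc, S.comp_zero hup,
    comp_zero]) fun f hf => ?_
  obtain ⟨w, hw, -⟩ := S.is_kernel hup (f ≫ e) (by rw [Category.assoc]; exact hf)
  refine ⟨sq.lift f w hw.symm, sq.lift_fst _ _ _, fun z hz => sq.hom_ext ?_ ?_⟩
  · rw [sq.lift_fst, hz]
  · rw [sq.lift_snd]
    apply (mono_of_conf hup).right_cancellation
    rw [hw, ← hz, Category.assoc, Category.assoc, sq.w]

lemma exists_retraction_of_section {X Y Z : E} {i : X ⟶ Y} {d : Y ⟶ Z} (h : S.conf i d)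
    {s : Z ⟶ Y} (hs : s ≫ d = 𝟙 Z) : ∃ r : Y ⟶ X, i ≫ r = 𝟙 X := by
  obtain ⟨r, hr, -⟩ := S.is_kernel h (𝟙 Y - d ≫ s)
    (by rw [Preadditive.sub_comp, Category.assoc, hs, Category.id_comp, Category.comp_id, sub_self])
  refine ⟨r, (mono_of_conf h).right_cancellation _ _ ?_⟩
  rw [Category.assoc, hr, Preadditive.comp_sub, ← Category.assoc, S.comp_zero h, zero_comp,
    sub_zero, Category.comp_id, Category.id_comp]

lemma exists_section_of_retraction {X Y Z : E} {i : X ⟶ Y} {d : Y ⟶ Z} (h : S.conf i d)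
    {r : Y ⟶ X} (hr : i ≫ r = 𝟙 X) :
    ∃ s : Z ⟶ Y, s ≫ d = 𝟙 Z ∧ d ≫ s = 𝟙 Y - r ≫ i := by
  obtain ⟨s, hs, -⟩ := S.is_cokernel h (𝟙 Y - r ≫ i)
    (by rw [Preadditive.comp_sub, ← Category.assoc, hr, Category.id_comp, Category.comp_id,
      sub_self])
  refine ⟨s, (epi_of_conf h).left_cancellation _ _ ?_, hs⟩
  rw [← Category.assoc, hs, Preadditive.sub_comp, Category.assoc, S.comp_zero h, comp_zero,
    sub_zero, Category.comp_id, Category.id_comp]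

namespace ExactStructure.ExtVanishes

lemma exists_section {X Y Z : E} (h : S.ExtVanishes Z X) {i : X ⟶ Y} {d : Y ⟶ Z}
    (hid : S.conf i d) : ∃ s : Z ⟶ Y, s ≫ d = 𝟙 Z := by
  obtain ⟨r, hr⟩ := h Y i d hid
  obtain ⟨s, hs, -⟩ := exists_section_of_retraction hid hr
  exact ⟨s, hs⟩

lemma exists_extension {A X Y Z : E} (h : S.ExtVanishes Z A) {i : X ⟶ Y} {d : Y ⟶ Z}
    (hid : S.conf i d) (f : X ⟶ A) : ∃ g : Y ⟶ A, i ≫ g = f := by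
  obtain ⟨P, g, j, d', hjd', hw, -⟩ := exists_conf_pushout hid f
  obtain ⟨r, hr⟩ := h P j d' hjd'
  exact ⟨g ≫ r, by rw [← Category.assoc, hw, Category.assoc, hr, Category.comp_id]⟩

lemma exists_lift {X W R T' : E} (h : S.ExtVanishes T' X) {a : X ⟶ W} {e : W ⟶ R}
    (hae : S.conf a e) (u : T' ⟶ R) : ∃ σ : T' ⟶ W, σ ≫ e = u := by
  obtain ⟨V, v₁, v₂, _, sq, hV, -⟩ := exists_conf_pullback hae u
  obtain ⟨s, hs⟩ := h.exists_section hV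
  exact ⟨s ≫ v₁, by rw [Category.assoc, sq.w, ← Category.assoc, hs, Category.id_comp]⟩

lemma of_iso_left {X Z Z' : E} (h : S.ExtVanishes Z X) (e : Z ≅ Z') : S.ExtVanishes Z' X :=
  fun M i d hid => h M i (d ≫ e.inv)
    (by simpa using S.conf_iso (Iso.refl X) (Iso.refl M) e.symm hid)

lemma of_iso_right {X X' Z : E} (h : S.ExtVanishes Z X) (e : X ≅ X') :
    S.ExtVanishes Z X' := by
  intro M i d hid
  obtain ⟨r, hr⟩ := h M (e.hom ≫ i) d
    (by simpa using S.conf_iso e.symm (Iso.refl M) (Iso.refl Z) hid)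
  rw [Category.assoc, e.hom_comp_eq_id] at hr
  exact ⟨r ≫ e.hom, by rw [← Category.assoc, hr, e.inv_hom_id]⟩

end ExactStructure.ExtVanishes

lemma extVanishes_biproduct_right {J : Type*} (X : J → E) [HasBiproduct X] {Z : E}
    (h : ∀ j, S.ExtVanishes Z (X j)) : S.ExtVanishes Z (⨁ X) := by
  intro M i d hid
  choose ρ hρ using fun j => (h j).exists_extension hid (biproduct.π X j)
  exact ⟨biproduct.lift ρ, biproduct.hom_ext _ _ fun j => by simp [hρ]⟩

lemma extVanishes_biproduct_left {J : Type*} (Z : J → E) [HasBiproduct Z] {X : E}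
    (h : ∀ j, S.ExtVanishes (Z j) X) : S.ExtVanishes (⨁ Z) X := by
  intro M i d hid
  choose σ hσ using fun j => (h j).exists_lift hid (biproduct.ι Z j)
  exact exists_retraction_of_section (s := biproduct.desc σ) hid
    (biproduct.hom_ext' _ _ fun j => by simp [hσ])

lemma isProjective_of_extVanishes {P : E} (h : ∀ X, S.ExtVanishes P X) : S.IsProjective P :=
  fun _ ⟨X, _, hid⟩ f => (h X).exists_lift hid f

/-- Exactness of `Ext¹(Q, X) → Ext¹(R, X) → Ext¹(T', X)` at `Ext¹(R, X)`, for the conflation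
`T' → R → Q`: an extension of `R` by `X` split over `T'` (by `σ`) is pulled back from one of
`Q`, and `p` lifts along the latter. -/
lemma exists_retraction_of_forall_lift {X W R T' Q : E} {a : X ⟶ W} {e : W ⟶ R}
    (hae : S.conf a e) {u : T' ⟶ R} {p : R ⟶ Q} (hup : S.conf u p) {σ : T' ⟶ W}
    (hσ : σ ≫ e = u)
    (hlift : ∀ (M : E) (j : X ⟶ M) (q : M ⟶ Q), S.conf j q → ∃ m : R ⟶ M, m ≫ q = p) :
    ∃ r : W ⟶ X, a ≫ r = 𝟙 X := by
  obtain ⟨V, v₁, v₂, a', sq, hV, ha'⟩ := exists_conf_pullback hae u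
  obtain ⟨rV, hrV⟩ := exists_retraction_of_section hV
    (sq.lift_snd σ (𝟙 T') (by rw [hσ, Category.id_comp]))
  obtain ⟨M, g, j, q, hjq, hgj, hgq⟩ :=
    exists_conf_pushout (conf_comp_of_isPullback hae hup sq) rV
  obtain ⟨m, hm⟩ := hlift M j q hjq
  obtain ⟨r, hr, -⟩ := S.is_kernel hjq (g - e ≫ m)
    (by rw [Preadditive.sub_comp, hgq, Category.assoc, hm, sub_self])
  have hag : a ≫ g = j := by
    rw [← ha', Category.assoc, hgj, ← Category.assoc, hrV, Category.id_comp]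
  refine ⟨r, (mono_of_conf hjq).right_cancellation _ _ ?_⟩
  rw [Category.assoc, hr, Preadditive.comp_sub, hag, ← Category.assoc, S.comp_zero hae, zero_comp,
    sub_zero, Category.id_comp]

lemma extVanishes_of_conf_of_forall_lift {X R T' Q : E} {u : T' ⟶ R} {p : R ⟶ Q}
    (hup : S.conf u p) (hX : S.ExtVanishes T' X)
    (hlift : ∀ (M : E) (j : X ⟶ M) (q : M ⟶ Q), S.conf j q → ∃ m : R ⟶ M, m ≫ q = p) :
    S.ExtVanishes R X := fun _ _ _ hae =>
  let ⟨_, hσ⟩ := hX.exists_lift hae u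
  exists_retraction_of_forall_lift hae hup hσ hlift

namespace ExactStructure.ExtVanishes

/-- Half-exactness of `Ext¹(Z, -)`.  Extend `β` to `φ : Y ⟶ B`; the pullback of `A → X → B`
along `φ` is an extension of `Y` by `A` which splits over `X`, hence splits, since
`Ext¹(Z, A) = 0`; its splitting, corrected by an extension of a map `X ⟶ A`, retracts `i`. -/
lemma of_conf {A X B Z : E} {α : A ⟶ X} {β : X ⟶ B}
    (hαβ : S.conf α β) (hA : S.ExtVanishes Z A) (hB : S.ExtVanishes Z B) :
    S.ExtVanishes Z X := by
  intro Y i d hid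
  obtain ⟨φ, hφ⟩ := hB.exists_extension hid β
  obtain ⟨Y', π, φ', α', sq, hα'φ', hα'π⟩ := exists_conf_pullback hαβ φ
  set ι := sq.lift (𝟙 X) i (by rw [Category.id_comp, hφ])
  have hιπ : ι ≫ π = 𝟙 X := sq.lift_fst _ _ _
  have hιφ' : ι ≫ φ' = i := sq.lift_snd _ _ _
  obtain ⟨r', hr'⟩ := exists_retraction_of_forall_lift hα'φ' hid hιφ' fun M j q hjq =>
    let ⟨s, hs⟩ := hA.exists_section hjq
    ⟨d ≫ s, by rw [Category.assoc, hs, Category.comp_id]⟩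
  obtain ⟨s', -, hs'⟩ := exists_section_of_retraction hα'φ' hr'
  obtain ⟨l, hl⟩ := hA.exists_extension hid (ι ≫ r')
  refine ⟨s' ≫ π + l ≫ α, ?_⟩
  calc i ≫ (s' ≫ π + l ≫ α) = ι ≫ (φ' ≫ s') ≫ π + (ι ≫ r') ≫ α := by
        rw [Preadditive.comp_add, ← hl, ← hιφ']; simp only [Category.assoc]
    _ = 𝟙 X := by
        rw [hs', Preadditive.sub_comp, Category.id_comp, Category.assoc, hα'π,
          Preadditive.comp_sub, hιπ, Category.assoc, sub_add_cancel]

lemma of_isTorsionPair {T F : Set E} (hTF : IsTorsionPair S T F)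
    {Z : E} (hT : ∀ t ∈ T, S.ExtVanishes Z t) (hF : ∀ f ∈ F, S.ExtVanishes Z f) (X : E) :
    S.ExtVanishes Z X :=
  let ⟨t, f, _, _, ht, hf, hid⟩ := hTF.2 X
  .of_conf hid (hT t ht) (hF f hf)

end ExactStructure.ExtVanishes

lemma extClosed_rightPerp (T : Set E) : ExtClosed S (rightPerp S T) := by
  intro X Y Z i d hid hX hZ t ht
  refine ⟨fun f => ?_, ExactStructure.ExtVanishes.of_conf hid (hX t ht).2 (hZ t ht).2⟩
  obtain ⟨g, hg, -⟩ := S.is_kernel hid f ((hZ t ht).1 _)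
  rw [← hg, (hX t ht).1 g, zero_comp]

lemma extVanishes_right_of_mem {T : Set E} {T₀ : E} [HasFiniteBiproducts E]
    (hTgen : ∀ t ∈ T, ∃ n : ℕ, Nonempty (t ≅ ⨁ (fun _ : Fin n => T₀)))
    {Z : E} (h : S.ExtVanishes Z T₀) {X : E} (hX : X ∈ T) : S.ExtVanishes Z X :=
  let ⟨_, ⟨e⟩⟩ := hTgen X hX
  (extVanishes_biproduct_right _ fun _ => h).of_iso_right e.symm

lemma extVanishes_left_of_mem {T : Set E} {T₀ : E} [HasFiniteBiproducts E]
    (hTgen : ∀ t ∈ T, ∃ n : ℕ, Nonempty (t ≅ ⨁ (fun _ : Fin n => T₀)))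
    {X : E} (h : S.ExtVanishes T₀ X) {t : E} (ht : t ∈ T) : S.ExtVanishes t X :=
  let ⟨_, ⟨e⟩⟩ := hTgen t ht
  (extVanishes_biproduct_left _ fun _ => h).of_iso_left e.symm

lemma exists_retraction_of_mono_biproduct {C : Type*} [Category C] [Preadditive C]
    {k : Type*} [Field k] [Linear k C] {T₀ : C}
    (hEnd : ∀ f : T₀ ⟶ T₀, ∃ c : k, f = c • 𝟙 T₀)
    {J : Type*} [HasBiproduct fun _ : J => T₀] (i : T₀ ⟶ ⨁ fun _ : J => T₀) [Mono i] :
    ∃ r, i ≫ r = 𝟙 T₀ := by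
  choose c hc using fun j => hEnd (i ≫ biproduct.π _ j)
  by_cases hc0 : ∃ j, c j ≠ 0
  · obtain ⟨j, hj⟩ := hc0
    exact ⟨(c j)⁻¹ • biproduct.π _ j, by
      rw [Linear.comp_smul, hc j, smul_smul, inv_mul_cancel₀ hj, one_smul]⟩
  · have hi : i = 0 := biproduct.hom_ext _ _ fun j => by
      simp [hc, not_not.1 (not_exists.1 hc0 j)]
    exact ⟨0, (cancel_mono i).1 (by simp [hi])⟩

lemma extVanishes_self {k : Type*} [Field k] [Linear k E] [HasFiniteBiproducts E] {T : Set E}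
    (hText : ExtClosed S T) {T₀ : E} (hT₀ : T₀ ∈ T)
    (hTgen : ∀ t ∈ T, ∃ n : ℕ, Nonempty (t ≅ ⨁ (fun _ : Fin n => T₀)))
    (hEnd : ∀ f : T₀ ⟶ T₀, ∃ c : k, f = c • 𝟙 T₀) : S.ExtVanishes T₀ T₀ := by
  intro M i d hid
  obtain ⟨n, ⟨e⟩⟩ := hTgen M (hText hid hT₀ hT₀)
  have := mono_of_conf hid
  obtain ⟨r, hr⟩ := exists_retraction_of_mono_biproduct hEnd (i ≫ e.hom)
  exact ⟨e.hom ≫ r, by rwa [← Category.assoc]⟩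

theorem universal_extension_projective_general
    (k : Type*) [Field k] [CategoryTheory.Linear k E] [HasFiniteBiproducts E]
    (S : ExactStructure E) (T : Set E)
    (hText : ExtClosed S T)
    -- `T` is right admissible: `(T, T^⊥)` is a (perpendicular) torsion pair
    (hadm : IsTorsionPair S T (rightPerp S T))
    -- `T ≃ k`-vect with irreducible object `T₀`
    (T₀ : E) (hT₀ : T₀ ∈ T)
    (hTgen : ∀ t ∈ T, ∃ n : ℕ, Nonempty (t ≅ ⨁ (fun _ : Fin n => T₀)))
    (hEnd : ∀ f : T₀ ⟶ T₀, ∃ c : k, f = c • 𝟙 T₀)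
    -- `Q` is a projective object of the exact category `T^⊥`
    (Q : E) (hQ : Q ∈ rightPerp S T)
    (hQproj : ∀ {Y Z : E}, Y ∈ rightPerp S T → Z ∈ rightPerp S T →
      ∀ (d : Y ⟶ Z), S.IsDeflation d → ∀ f : Q ⟶ Z, ∃ g : Q ⟶ Y, g ≫ d = f)
    -- the universal extension `T' → R → Q` of `Q` by `T₀`
    (T' R : E) (hT' : T' ∈ T) (u : T' ⟶ R) (p : R ⟶ Q) (hconf : S.conf u p)
    (hsurj : ∀ {M : E} (j : T₀ ⟶ M) (q : M ⟶ Q), S.conf j q →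
      ∃ (φ : T' ⟶ T₀) (m : R ⟶ M), u ≫ m = φ ≫ j ∧ m ≫ q = p) :
    (∀ {Y Z : E} (d : Y ⟶ Z), S.IsDeflation d → ∀ f : R ⟶ Z, ∃ g : R ⟶ Y, g ≫ d = f) ∧
    (∀ {Y Z : E} (d : Y ⟶ Z), S.IsDeflation d → ∀ f : T₀ ⟶ Z, ∃ g : T₀ ⟶ Y, g ≫ d = f) := by
  have hTT : ∀ {t X : E}, t ∈ T → X ∈ T → S.ExtVanishes t X := fun ht hX =>
    extVanishes_left_of_mem hTgen
      (extVanishes_right_of_mem hTgen (extVanishes_self hText hT₀ hTgen hEnd) hX) ht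
  have hRT₀ : S.ExtVanishes R T₀ :=
    extVanishes_of_conf_of_forall_lift hconf (hTT hT' hT₀) fun _ j q hjq =>
      let ⟨_, m, _, hm⟩ := hsurj j q hjq
      ⟨m, hm⟩
  have hRF : ∀ f ∈ rightPerp S T, S.ExtVanishes R f := fun f hf =>
    extVanishes_of_conf_of_forall_lift hconf (hf T' hT').2 fun M j q hjq => by
      obtain ⟨s, hs⟩ := hQproj (extClosed_rightPerp T hjq hf hQ) hQ q ⟨f, j, hjq⟩ (𝟙 Q)
      exact ⟨p ≫ s, by rw [Category.assoc, hs, Category.comp_id]⟩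
  have hR : S.IsProjective R := isProjective_of_extVanishes
    (.of_isTorsionPair hadm (fun _ => extVanishes_right_of_mem hTgen hRT₀) hRF)
  have hT₀proj : S.IsProjective T₀ := isProjective_of_extVanishes
    (.of_isTorsionPair hadm (fun _ => hTT hT₀) fun f hf => (hf T₀ hT₀).2)
  exact ⟨hR, hT₀proj⟩

/-- Let `T ≃ k-vect` be a right admissible subcategory of a `k`-linear
`Ext¹`-finite exact category `E`, with irreducible object `T₀` (every object of `T` is a
finite direct sum of copies of `T₀` and `End(T₀) = k`), and let `Q` be a projective object
of the perpendicular exact category `T^⊥`.  Then the universal extension `R` of `Q` by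
`T₀` — i.e. the middle term of a conflation `T' → R → Q` with `T' ∈ T` for which the
connecting map `Hom(T', T₀) → Ext¹(Q, T₀)`, `φ ↦ φ_*[conflation]`, is bijective (this is
exactly the conflation `T₀ ⊗ Ext¹(Q,T₀)^∨ → R → Q` classified by the canonical class;
surjectivity says every extension of `Q` by `T₀` is a pushout of the given one, and
injectivity says that a `φ` whose pushout splits, i.e. which extends over `u`, is zero) —
is a projective object of `E`, and `T₀` itself is projective in `E`. -/
theorem universal_extension_projective
    (k : Type*) [Field k] [CategoryTheory.Linear k E] [HasFiniteBiproducts E]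
    (S : ExactStructure E) (T : Set E)
    (hText : ExtClosed S T)
    -- `T` is right admissible: `(T, T^⊥)` is a (perpendicular) torsion pair
    (hadm : IsTorsionPair S T (rightPerp S T))
    -- `T ≃ k`-vect with irreducible object `T₀`
    (T₀ : E) (hT₀ : T₀ ∈ T)
    (hTgen : ∀ t ∈ T, ∃ n : ℕ, Nonempty (t ≅ ⨁ (fun _ : Fin n => T₀)))
    (hEnd : ∀ f : T₀ ⟶ T₀, ∃ c : k, f = c • 𝟙 T₀)
    -- `Q` is a projective object of the exact category `T^⊥`
    (Q : E) (hQ : Q ∈ rightPerp S T)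
    (hQproj : ∀ {Y Z : E}, Y ∈ rightPerp S T → Z ∈ rightPerp S T →
      ∀ (d : Y ⟶ Z), S.IsDeflation d → ∀ f : Q ⟶ Z, ∃ g : Q ⟶ Y, g ≫ d = f)
    -- the universal extension `T' → R → Q` of `Q` by `T₀`
    (T' R : E) (hT' : T' ∈ T) (u : T' ⟶ R) (p : R ⟶ Q) (hconf : S.conf u p)
    (hsurj : ∀ {M : E} (j : T₀ ⟶ M) (q : M ⟶ Q), S.conf j q →
      ∃ (φ : T' ⟶ T₀) (m : R ⟶ M), u ≫ m = φ ≫ j ∧ m ≫ q = p)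
    (hinj : ∀ φ : T' ⟶ T₀, (∃ ρ : R ⟶ T₀, u ≫ ρ = φ) → φ = 0) :
    (∀ {Y Z : E} (d : Y ⟶ Z), S.IsDeflation d → ∀ f : R ⟶ Z, ∃ g : R ⟶ Y, g ≫ d = f) ∧
    (∀ {Y Z : E} (d : Y ⟶ Z), S.IsDeflation d → ∀ f : T₀ ⟶ Z, ∃ g : T₀ ⟶ Y, g ≫ d = f) :=
  universal_extension_projective_general k S T hText hadm T₀ hT₀ hTgen hEnd Q hQ hQproj T' R hT' u p
    hconf hsurj

end ExactCatPaper
end
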